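/- arXiv:math/0308158 — 5 statements merged into one kernel-verified Lean document; each statement's English description precedes it below -/
import Mathlib

section
/- Let the action of G on (X, μ) be ergodic. If for every representation L of X⋊G on a separable complex Hilbert space, every L-cocycle is an L-coboundary, then the action of G on (X, μ) has property T. -/
open MeasureTheory Filter Topology
open scoped Pointwise symmDiff InnerProductSpace ENNReal

section Defs

variable (G : Type*) {X : Type*} [Group G] [MulAction G X] [MeasurableSpace X]

/-- The action of `G` on `X` is measurable and the measure `μ` is quasi-invariant:
for every `g`, the pushforward of `μ` under `x ↦ g • x` is equivalent to `μ`. -/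
def QuasiInvariantAction (μ : Measure X) : Prop :=
  (∀ g : G, Measurable fun x : X => g • x) ∧
    ∀ g : G, μ.map (fun x : X => g • x) ≪ μ ∧ μ ≪ μ.map (fun x : X => g • x)

/-- Ergodicity of the action: every measurable `A` with `μ((g • A) ∆ A) = 0` for all `g`
is null or conull. -/
def IsErgodicSMulAction (μ : Measure X) : Prop :=
  ∀ A : Set X, MeasurableSet A → (∀ g : G, μ ((g • A) ∆ A) = 0) → μ A = 0 ∨ μ A = 1

variable {G}
variable {K : Type*} [NormedAddCommGroup K] [InnerProductSpace ℂ K]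
  [MeasurableSpace K] [BorelSpace K]

/-- A representation of the action groupoid `X ⋊ G` on the Hilbert space `K`. -/
def IsGroupoidRep (μ : Measure X) (L : X → G → (K ≃ₗᵢ[ℂ] K)) : Prop :=
  (∀ (g : G) (v : K), Measurable fun x : X => L x g v) ∧
    ∀ g₁ g₂ : G, ∀ᵐ x ∂μ, ∀ v : K, L x (g₁ * g₂) v = L x g₁ (L (g₁⁻¹ • x) g₂ v)

/-- An `L`-cocycle. -/
def IsLCocycle (μ : Measure X) (L : X → G → (K ≃ₗᵢ[ℂ] K)) (b : X → G → K) : Prop :=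
  (∀ g : G, Measurable fun x : X => b x g) ∧
    ∀ g₁ g₂ : G, ∀ᵐ x ∂μ, b x (g₁ * g₂) = b x g₁ + L x g₁ (b (g₁⁻¹ • x) g₂)

/-- An `L`-coboundary. -/
def IsLCoboundary (μ : Measure X) (L : X → G → (K ≃ₗᵢ[ℂ] K)) (b : X → G → K) : Prop :=
  ∃ ξ : X → K, Measurable ξ ∧ ∀ g : G, ∀ᵐ x ∂μ, b x g = ξ x - L x g (ξ (g⁻¹ • x))

/-- A unit section: a measurable map `ξ : X → K` of norm one almost everywhere. -/
def IsUnitSection (μ : Measure X) (ξ : X → K) : Prop :=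
  Measurable ξ ∧ ∀ᵐ x ∂μ, ‖ξ x‖ = 1

/-- The representation `L` has an invariant unit section. -/
def HasInvariantUnitSection (μ : Measure X) (L : X → G → (K ≃ₗᵢ[ℂ] K)) : Prop :=
  ∃ ξ : X → K, IsUnitSection μ ξ ∧ ∀ g : G, ∀ᵐ x ∂μ, L x g (ξ (g⁻¹ • x)) = ξ x

/-- The representation `L` almost has invariant unit sections. -/
def AlmostHasInvariantUnitSections (μ : Measure X) (L : X → G → (K ≃ₗᵢ[ℂ] K)) : Prop :=
  ∃ ξ : ℕ → X → K, (∀ n, IsUnitSection μ (ξ n)) ∧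
    ∀ g : G, ∀ᵐ x ∂μ,
      Tendsto (fun n => ‖L x g (ξ n (g⁻¹ • x)) - ξ n x‖) atTop (𝓝 0)

variable (G)

/-- Property (T) for the action of `G` on `(X, μ)`: every representation of `X ⋊ G`
on a separable complex Hilbert space that almost has invariant unit sections has an
invariant unit section. -/
def ActionHasPropertyT (μ : Measure X) : Prop :=
  ∀ (K : Type) [NormedAddCommGroup K] [InnerProductSpace ℂ K]
    [CompleteSpace K] [SecondCountableTopology K]
    [MeasurableSpace K] [BorelSpace K]
    (L : X → G → (K ≃ₗᵢ[ℂ] K)),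
    IsGroupoidRep μ L → AlmostHasInvariantUnitSections μ L → HasInvariantUnitSection μ L

end Defs

/-!
The coboundaries `cₙ(x, g) = ξₙ(x) - L(x, g) ξₙ(g⁻¹ x)` of almost invariant unit sections tend
to `0` almost everywhere, so along a sparse subsequence `φ` the weighted family
`((j + 1) c_{φ j}(x, g))ⱼ` is square summable: it is a cocycle for the diagonal representation
of `L` on `ℓ²(ℕ, K)`. If that cocycle is the coboundary of `Ξ`, each `ηⱼ = (j + 1) ξ_{φ j} - Ξⱼ`
is an invariant section. As `‖(j + 1) ξ_{φ j}(x)‖ = j + 1` while `‖Ξⱼ(x)‖ ≤ ‖Ξ(x)‖ < ∞`, some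
`ηⱼ` is nonzero on a set of positive measure; that set is invariant, hence conull by ergodicity,
and `ηⱼ / ‖ηⱼ‖` is an invariant unit section.
-/

open TopologicalSpace
open scoped NNReal

namespace lp

variable {α : Type*} {E : α → Type*} [∀ i, NormedAddCommGroup (E i)] {p : ℝ≥0∞}

theorem continuous_single [DecidableEq α] [Fact (1 ≤ p)] (i : α) :
    Continuous (lp.single (E := E) p i) :=
  AddMonoidHomClass.continuous_of_bound (lp.singleAddMonoidHom (E := E) p i) 1 fun a => by
    simp [lp.singleAddMonoidHom, lp.norm_single (zero_lt_one.trans_le Fact.out)]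

theorem separableSpace [Countable α] [∀ i, SeparableSpace (E i)] [Fact (1 ≤ p)] (hp : p ≠ ∞) :
    SeparableSpace (lp E p) := by
  classical
  let partialSum (s : Finset α) (v : ∀ i, E i) : lp E p := ∑ i ∈ s, lp.single p i (v i)
  have hsep : IsSeparable (⋃ s : Finset α, Set.range (partialSum s)) :=
    .iUnion fun s => isSeparable_range <|
      continuous_finsetSum _ fun i _ => (continuous_single i).comp (continuous_apply i)
  refine isSeparable_univ_iff.1 <| hsep.closure.mono fun f _ => ?_
  refine mem_closure_of_tendsto (lp.hasSum_single hp f) (Eventually.of_forall fun s => ?_)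
  exact Set.mem_iUnion.2 ⟨s, f, rfl⟩

theorem exists_nsmul_sub_apply_ne_zero {K : Type*} [NormedAddCommGroup K] [NormedSpace ℝ K]
    (hp : p ≠ 0) {v : ℕ → K} (hv : ∀ j, ‖v j‖ = 1) (w : lp (fun _ : ℕ => K) p) :
    ∃ j : ℕ, (j + 1) • v j - w j ≠ 0 := by
  obtain ⟨j, hj⟩ := exists_nat_gt ‖w‖
  refine ⟨j, sub_ne_zero.2 fun h => hj.not_ge ?_⟩
  calc (j : ℝ) ≤ ‖(j + 1) • v j‖ := by simp [RCLike.norm_nsmul ℝ, hv]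
    _ = ‖w j‖ := by rw [h]
    _ ≤ ‖w‖ := norm_apply_le_norm hp w j

open scoped Classical in
variable (p) in
noncomputable def ofFun (f : ∀ i, E i) : lp E p :=
  if h : Memℓp f p then ⟨f, h⟩ else 0

theorem coeFn_ofFun {f : ∀ i, E i} (hf : Memℓp f p) : ⇑(ofFun p f) = f := by
  rw [ofFun, dif_pos hf]

variable {X : Type*} [MeasurableSpace X]

theorem measurable_of_measurable_apply [Countable α] [∀ i, MeasurableSpace (E i)]
    [∀ i, BorelSpace (E i)] [∀ i, SecondCountableTopology (E i)] [Fact (1 ≤ p)]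
    [MeasurableSpace (lp E p)] [BorelSpace (lp E p)] (hp : p ≠ ∞) {F : X → lp E p}
    (hF : ∀ i, Measurable fun x => F x i) : Measurable F := by
  classical
  have := separableSpace (E := E) hp
  have := UniformSpace.secondCountable_of_separable (lp E p)
  refine measurable_of_tendsto_metrizable' atTop
    (f := fun s x => ∑ i ∈ s, lp.single p i (F x i)) (fun s => ?_) ?_
  · exact Finset.measurable_sum _ fun i _ => (continuous_single i).measurable.comp (hF i)
  · exact tendsto_pi_nhds.2 fun x => lp.hasSum_single hp (F x)

theorem measurableSet_memℓp [Countable α] [∀ i, MeasurableSpace (E i)]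
    [∀ i, OpensMeasurableSpace (E i)] (hp : 0 < p.toReal) {s : X → ∀ i, E i}
    (hs : ∀ i, Measurable fun x => s x i) : MeasurableSet {x | Memℓp (s x) p} := by
  have h : {x | Memℓp (s x) p} =
      (fun x => ∑' i, ((‖s x i‖₊ ^ p.toReal : ℝ≥0) : ℝ≥0∞)) ⁻¹' {∞}ᶜ := by
    ext x
    rw [Set.mem_preimage, Set.mem_compl_singleton_iff, ENNReal.tsum_coe_ne_top_iff_summable,
      ← NNReal.summable_coe]
    simp [memℓp_gen_iff hp]
  rw [h]
  exact (Measurable.tsum fun i => ((hs i).nnnorm.pow_const _).coe_nnreal_ennreal)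
    (measurableSet_singleton ∞).compl

theorem measurable_ofFun [Countable α] [∀ i, MeasurableSpace (E i)]
    [∀ i, BorelSpace (E i)] [∀ i, SecondCountableTopology (E i)] [Fact (1 ≤ p)]
    [MeasurableSpace (lp E p)] [BorelSpace (lp E p)] (hp : p ≠ ∞) {s : X → ∀ i, E i}
    (hs : ∀ i, Measurable fun x => s x i) : Measurable fun x => ofFun p (s x) := by
  have hp' : 0 < p.toReal := ENNReal.toReal_pos (zero_lt_one.trans_le Fact.out).ne' hp
  refine measurable_of_measurable_apply hp fun i => ?_
  classical
  have h : (fun x => ofFun p (s x) i) = fun x => if Memℓp (s x) p then s x i else 0 := by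
    ext x
    by_cases hx : Memℓp (s x) p
    · simp [hx, coeFn_ofFun hx]
    · simp [hx, ofFun]
  rw [h]
  exact Measurable.ite (measurableSet_memℓp hp' hs) (hs i) measurable_const

variable {𝕜 : Type*} [NormedField 𝕜] {F : α → Type*} [∀ i, NormedAddCommGroup (F i)]
  [∀ i, NormedSpace 𝕜 (E i)] [∀ i, NormedSpace 𝕜 (F i)] [Fact (1 ≤ p)]

noncomputable def congr (U : ∀ i, E i ≃ₗᵢ[𝕜] F i) : lp E p ≃ₗᵢ[𝕜] lp F p where
  toFun f := ⟨fun i => U i (f i), (lp.memℓp f).mono' fun i => (U i).norm_map _ |>.le⟩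
  invFun f := ⟨fun i => (U i).symm (f i), (lp.memℓp f).mono' fun i => (U i).symm.norm_map _ |>.le⟩
  map_add' f g := lp.ext <| funext fun i => map_add (U i) (f i) (g i)
  map_smul' c f := lp.ext <| funext fun i => map_smul (U i) c (f i)
  left_inv f := lp.ext <| funext fun i => (U i).symm_apply_apply _
  right_inv f := lp.ext <| funext fun i => (U i).apply_symm_apply _
  norm_map' f := by
    have hp : p ≠ 0 := (zero_lt_one.trans_le Fact.out).ne'
    exact le_antisymm (lp.norm_mono hp fun i => ((U i).norm_map _).le)
      (lp.norm_mono hp fun i => ((U i).norm_map _).ge)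

@[simp]
theorem congr_apply (U : ∀ i, E i ≃ₗᵢ[𝕜] F i) (f : lp E p) (i : α) :
    congr U f i = U i (f i) :=
  rfl

end lp

theorem memℓp_of_eventually_norm_le_geometric {E : Type*} [NormedAddCommGroup E] {p : ℝ≥0∞}
    (hp : 1 ≤ p) {f : ℕ → E} {r : ℝ} (hr₀ : 0 ≤ r) (hr₁ : r < 1)
    (h : ∀ᶠ j in atTop, ‖f j‖ ≤ r ^ j) : Memℓp f p := by
  refine (memℓp_gen (p := 1) ?_).of_exponent_ge hp
  simpa using (summable_geometric_of_lt_one hr₀ hr₁).of_norm_bounded_eventually_nat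
    (f := fun j => ‖f j‖) (by simpa using h)

theorem measurable_apply_of_continuous_of_measurable {X V W : Type*} [MeasurableSpace X]
    [TopologicalSpace V] [MetrizableSpace V] [SecondCountableTopology V] [MeasurableSpace V]
    [OpensMeasurableSpace V] [TopologicalSpace W] [PseudoMetrizableSpace W] [MeasurableSpace W]
    [BorelSpace W] {F : X → V → W} (hc : ∀ x, Continuous (F x))
    (hm : ∀ v, Measurable fun x => F x v) {w : X → V} (hw : Measurable w) :
    Measurable fun x => F x (w x) :=
  (measurable_uncurry_of_continuous_of_measurable (u := fun v x => F x v) hc hm).comp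
    (hw.prodMk measurable_id)

section SubsequenceSelection

variable {X ι E : Type*} [MeasurableSpace X] {μ : Measure X} [NormedAddCommGroup E]

theorem exists_ae_eventually_norm_lt [IsFiniteMeasure μ] [Countable ι] {f : ℕ → ι → X → E}
    (hf : ∀ n i, AEStronglyMeasurable (f n i) μ)
    (hlim : ∀ i, ∀ᵐ x ∂μ, Tendsto (fun n => f n i x) atTop (𝓝 0))
    {ε : ℕ → ℝ} (hε : ∀ j, 0 < ε j) :
    ∃ φ : ℕ → ℕ, ∀ᵐ x ∂μ, ∀ i, ∀ᶠ j in atTop, ‖f (φ j) i x‖ < ε j := by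
  cases isEmpty_or_nonempty ι
  · exact ⟨id, ae_of_all _ fun _ i => isEmptyElim i⟩
  obtain ⟨e, he⟩ := exists_surjective_nat ι
  let bad (j n k : ℕ) : Set X := {x | ENNReal.ofReal (ε j) ≤ edist (f n (e k) x) 0}
  have hsmall : ∀ j, ∃ n, ∀ k ∈ Set.Iic j, μ (bad j n k) ≤ 2⁻¹ ^ j := fun j =>
    ((eventually_all_finite (Set.finite_Iic j)).2 fun k _ =>
      (tendstoInMeasure_of_tendsto_ae (hf · (e k)) (hlim (e k)) _
        (ENNReal.ofReal_pos.2 (hε j))).eventually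
        (Iic_mem_nhds (ENNReal.pow_pos (by simp) j))).exists
  choose φ hφ using hsmall
  -- Borel–Cantelli for the bad sets of index `j ≥ k`
  have hgood : ∀ k, ∀ᵐ x ∂μ, ∀ᶠ j in atTop, x ∉ bad j (φ j) k := by
    intro k
    classical
    let s (j : ℕ) : Set X := if k ≤ j then bad j (φ j) k else ∅
    have hs : ∀ j, μ (s j) ≤ 2⁻¹ ^ j := fun j => by
      by_cases hkj : k ≤ j
      · simpa [s, hkj] using hφ j k hkj
      · simp [s, hkj]
    have hsum : ∑' j, μ (s j) ≠ ∞ := ne_top_of_le_ne_top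
      (by simp [ENNReal.tsum_geometric, ENNReal.one_sub_inv_two]) (ENNReal.tsum_le_tsum hs)
    filter_upwards [ae_eventually_notMem hsum] with x hx
    filter_upwards [hx, eventually_ge_atTop k] with j hj hkj
    simpa [s, hkj] using hj
  refine ⟨φ, ?_⟩
  filter_upwards [ae_all_iff.2 hgood] with x hx i
  obtain ⟨k, rfl⟩ := he i
  filter_upwards [hx k] with j hj
  rwa [Set.mem_ofPred_eq, not_le, edist_zero_right, ← ofReal_norm,
    ENNReal.ofReal_lt_ofReal_iff (hε j)] at hj

end SubsequenceSelection

section Groupoid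

variable {G X K : Type*} [Group G] [MulAction G X] [NormedAddCommGroup K] [InnerProductSpace ℂ K]

def coboundary (L : X → G → (K ≃ₗᵢ[ℂ] K)) (ξ : X → K) (x : X) (g : G) : K :=
  ξ x - L x g (ξ (g⁻¹ • x))

noncomputable def lpDiagonal (L : X → G → (K ≃ₗᵢ[ℂ] K)) (x : X) (g : G) :
    lp (fun _ : ℕ => K) 2 ≃ₗᵢ[ℂ] lp (fun _ : ℕ => K) 2 :=
  lp.congr fun _ => L x g

variable {L : X → G → (K ≃ₗᵢ[ℂ] K)}

theorem coboundary_eq_zero_iff {ξ : X → K} {x : X} {g : G} :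
    coboundary L ξ x g = 0 ↔ L x g (ξ (g⁻¹ • x)) = ξ x :=
  sub_eq_zero.trans eq_comm

theorem coboundary_sub (ξ ζ : X → K) (x : X) (g : G) :
    coboundary L (ξ - ζ) x g = coboundary L ξ x g - coboundary L ζ x g := by
  simp only [coboundary, Pi.sub_apply, map_sub]
  abel

theorem coboundary_nsmul (n : ℕ) (ξ : X → K) (x : X) (g : G) :
    coboundary L (n • ξ) x g = n • coboundary L ξ x g := by
  simp only [coboundary, Pi.smul_apply, map_nsmul, smul_sub]

variable [MeasurableSpace X] {μ : Measure X}

def IsInvariantSection (μ : Measure X) (L : X → G → (K ≃ₗᵢ[ℂ] K)) (η : X → K) : Prop :=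
  ∀ g : G, ∀ᵐ x ∂μ, L x g (η (g⁻¹ • x)) = η x

theorem isInvariantSection_sub_of_coboundary_ae_eq {ξ ζ : X → K}
    (h : ∀ g : G, ∀ᵐ x ∂μ, coboundary L ξ x g = coboundary L ζ x g) :
    IsInvariantSection μ L (ξ - ζ) := fun g => by
  filter_upwards [h g] with x hx
  rw [← coboundary_eq_zero_iff, coboundary_sub, hx, sub_self]

theorem IsInvariantSection.ae_ne_zero [IsProbabilityMeasure μ] [MeasurableSpace K]
    [OpensMeasurableSpace K] (herg : IsErgodicSMulAction G μ) {η : X → K}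
    (hη : IsInvariantSection μ L η) (hm : Measurable η) (hpos : μ {x | η x ≠ 0} ≠ 0) :
    ∀ᵐ x ∂μ, η x ≠ 0 := by
  have hA : MeasurableSet {x | η x ≠ 0} := hm (measurableSet_singleton 0).compl
  have hinv : ∀ g : G, μ ((g • {x | η x ≠ 0}) ∆ {x | η x ≠ 0}) = 0 := fun g => by
    refine measure_symmDiff_eq_zero_iff.2 (eventuallyEq_set.2 ?_)
    filter_upwards [hη g] with x hx
    rw [Set.mem_smul_set_iff_inv_smul_mem, ← hx, map_ne_zero_iff _ (L x g).injective]
    rfl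
  exact ae_iff.2 <| (prob_compl_eq_zero_iff hA).2 <| (herg _ hA hinv).resolve_left hpos

theorem IsInvariantSection.hasInvariantUnitSection [MeasurableSpace K] [BorelSpace K]
    [SecondCountableTopology K] {η : X → K} (hη : IsInvariantSection μ L η)
    (hm : Measurable η) (hne : ∀ᵐ x ∂μ, η x ≠ 0) : HasInvariantUnitSection μ L := by
  refine ⟨fun x => (‖η x‖ : ℂ)⁻¹ • η x, ⟨?_, ?_⟩, fun g => ?_⟩
  · exact (Complex.measurable_ofReal.comp hm.norm).inv.smul hm
  · filter_upwards [hne] with x hx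
    rw [norm_smul, norm_inv, Complex.norm_real, norm_norm, inv_mul_cancel₀ (norm_ne_zero_iff.2 hx)]
  · filter_upwards [hη g] with x hx
    rw [map_smul, hx, ← hx, LinearIsometryEquiv.norm_map]

theorem IsLCoboundary.exists_coboundary_apply_eq [MeasurableSpace (lp (fun _ : ℕ => K) 2)]
    {c : ℕ → X → G → K}
    (hmem : ∀ᵐ x ∂μ, ∀ g, Memℓp (fun j => c j x g) 2)
    (h : IsLCoboundary μ (lpDiagonal L) fun x g => lp.ofFun 2 fun j => c j x g) :
    ∃ Ξ : X → lp (fun _ : ℕ => K) 2, Measurable Ξ ∧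
      ∀ j g, ∀ᵐ x ∂μ, c j x g = coboundary L (Ξ · j) x g := by
  obtain ⟨Ξ, hΞ, hb⟩ := h
  refine ⟨Ξ, hΞ, fun j g => ?_⟩
  filter_upwards [hb g, hmem] with x hx hx'
  calc c j x g = lp.ofFun 2 (fun j => c j x g) j := by rw [lp.coeFn_ofFun (hx' g)]
    _ = coboundary L (Ξ · j) x g := congrArg (· j) hx

variable [MeasurableSpace K] [BorelSpace K] [SecondCountableTopology K]

theorem measurable_coboundary (hact : ∀ g : G, Measurable (g • · : X → X))
    (hL : ∀ (g : G) (v : K), Measurable fun x => L x g v) {ξ : X → K} (hξ : Measurable ξ)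
    (g : G) : Measurable fun x => coboundary L ξ x g :=
  hξ.sub <| measurable_apply_of_continuous_of_measurable (fun x => (L x g).continuous) (hL g)
    (hξ.comp (hact g⁻¹))

theorem isLCocycle_coboundary (hact : ∀ g : G, Measurable (g • · : X → X))
    (hL : IsGroupoidRep μ L) {ξ : X → K} (hξ : Measurable ξ) :
    IsLCocycle μ L (coboundary L ξ) := by
  refine ⟨measurable_coboundary hact hL.1 hξ, fun g₁ g₂ => ?_⟩
  filter_upwards [hL.2 g₁ g₂] with x hx
  simp only [coboundary, hx, mul_inv_rev, mul_smul, map_sub]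
  abel

theorem exists_subseq_memℓp_coboundary [IsFiniteMeasure μ] [Countable G]
    (hact : ∀ g : G, Measurable (g • · : X → X))
    (hL : ∀ (g : G) (v : K), Measurable fun x => L x g v) {ξ : ℕ → X → K}
    (hξ : ∀ n, Measurable (ξ n))
    (hlim : ∀ g : G, ∀ᵐ x ∂μ, Tendsto (fun n => ‖L x g (ξ n (g⁻¹ • x)) - ξ n x‖) atTop (𝓝 0)) :
    ∃ φ : ℕ → ℕ, ∀ᵐ x ∂μ, ∀ g, Memℓp (fun j => coboundary L ((j + 1) • ξ (φ j)) x g) 2 := by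
  obtain ⟨φ, hφ⟩ := exists_ae_eventually_norm_lt
    (fun n g => (measurable_coboundary hact hL (hξ n) g).aestronglyMeasurable)
    (fun g => by
      filter_upwards [hlim g] with x hx
      simpa [coboundary, tendsto_zero_iff_norm_tendsto_zero, norm_sub_rev] using hx)
    (ε := fun j => 2⁻¹ ^ j / (j + 1)) (fun j => by positivity)
  refine ⟨φ, ?_⟩
  filter_upwards [hφ] with x hx g
  refine memℓp_of_eventually_norm_le_geometric one_le_two (r := 2⁻¹) (by norm_num)
    (by norm_num) ?_
  filter_upwards [hx g] with j hj
  rw [coboundary_nsmul, RCLike.norm_nsmul ℝ, nsmul_eq_mul, Nat.cast_add_one]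
  calc _ ≤ ((j : ℝ) + 1) * (2⁻¹ ^ j / (j + 1)) := by gcongr
    _ = 2⁻¹ ^ j := mul_div_cancel₀ _ (by positivity)

theorem hasInvariantUnitSection_of_ae_exists_ne_zero [IsProbabilityMeasure μ] {ι : Type*}
    [Countable ι] (herg : IsErgodicSMulAction G μ) {η : ι → X → K}
    (hη : ∀ i, IsInvariantSection μ L (η i)) (hm : ∀ i, Measurable (η i))
    (hne : ∀ᵐ x ∂μ, ∃ i, η i x ≠ 0) : HasInvariantUnitSection μ L := by
  have hne' : ∀ᵐ x ∂μ, x ∈ ⋃ i, {x | η i x ≠ 0} := by simpa using hne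
  obtain ⟨i, hi⟩ := exists_measure_pos_of_not_measure_iUnion_null
      (μ := μ) (s := fun i => {x | η i x ≠ 0}) <| by
    rw [measure_congr (eventuallyEq_univ.2 (eventually_mem_set.1 hne')), measure_univ]
    exact one_ne_zero
  exact (hη i).hasInvariantUnitSection (hm i) ((hη i).ae_ne_zero herg (hm i) hi.ne')

variable [MeasurableSpace (lp (fun _ : ℕ => K) 2)] [BorelSpace (lp (fun _ : ℕ => K) 2)]

theorem IsGroupoidRep.lpDiagonal (hL : IsGroupoidRep μ L) :
    IsGroupoidRep μ (lpDiagonal L) := by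
  refine ⟨fun g v => lp.measurable_of_measurable_apply ENNReal.ofNat_ne_top fun j =>
    hL.1 g (v j), fun g₁ g₂ => ?_⟩
  filter_upwards [hL.2 g₁ g₂] with x hx v
  exact lp.ext <| funext fun j => hx (v j)

theorem isLCocycle_lpDiagonal_ofFun
    (hqmp : ∀ g : G, Measure.QuasiMeasurePreserving (g • · : X → X) μ μ)
    {c : ℕ → X → G → K} (hc : ∀ j, IsLCocycle μ L (c j))
    (hmem : ∀ᵐ x ∂μ, ∀ g, Memℓp (fun j => c j x g) 2) :
    IsLCocycle μ (lpDiagonal L) fun x g => lp.ofFun 2 fun j => c j x g := by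
  refine ⟨fun g => lp.measurable_ofFun ENNReal.ofNat_ne_top fun j => (hc j).1 g,
    fun g₁ g₂ => ?_⟩
  filter_upwards [hmem, (hqmp g₁⁻¹).ae hmem, ae_all_iff.2 fun j => (hc j).2 g₁ g₂]
    with x hx hx' hc
  refine lp.ext <| funext fun j => ?_
  simp only [lp.coeFn_add, Pi.add_apply, lpDiagonal, lp.congr_apply, lp.coeFn_ofFun (hx _),
    lp.coeFn_ofFun (hx' g₂), hc j]

end Groupoid

theorem vanishing_cohomology_implies_propertyT_general
    {G X : Type*} [Group G] [Countable G]
    [MeasurableSpace X] [MulAction G X]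
    (μ : Measure X) [IsProbabilityMeasure μ]
    (hqi : QuasiInvariantAction G μ) (herg : IsErgodicSMulAction G μ)
    (hvanish : ∀ (K : Type) [NormedAddCommGroup K] [InnerProductSpace ℂ K]
      [CompleteSpace K] [SecondCountableTopology K] [MeasurableSpace K] [BorelSpace K]
      (L : X → G → (K ≃ₗᵢ[ℂ] K)), IsGroupoidRep μ L →
      ∀ b : X → G → K, IsLCocycle μ L b → IsLCoboundary μ L b) :
    ActionHasPropertyT G μ := by
  intro K _ _ _ _ _ _ L hL ⟨ξ, hξ, hξ_lim⟩
  have hqmp : ∀ g : G, Measure.QuasiMeasurePreserving (g • · : X → X) μ μ :=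
    fun g => ⟨hqi.1 g, (hqi.2 g).1⟩
  obtain ⟨φ, hmem⟩ := exists_subseq_memℓp_coboundary hqi.1 hL.1 (fun n => (hξ n).1) hξ_lim
  let : MeasurableSpace (lp (fun _ : ℕ => K) 2) := borel _
  have : BorelSpace (lp (fun _ : ℕ => K) 2) := ⟨rfl⟩
  have := lp.separableSpace (E := fun _ : ℕ => K) (p := 2) ENNReal.ofNat_ne_top
  have := UniformSpace.secondCountable_of_separable (lp (fun _ : ℕ => K) 2)
  have hξ' (j : ℕ) : Measurable ((j + 1) • ξ (φ j)) := (hξ (φ j)).1.const_smul _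
  have hcoc := isLCocycle_lpDiagonal_ofFun hqmp
    (fun j => isLCocycle_coboundary hqi.1 hL (hξ' j)) hmem
  obtain ⟨Ξ, hΞ, hcob⟩ := (hvanish _ _ hL.lpDiagonal _ hcoc).exists_coboundary_apply_eq hmem
  refine hasInvariantUnitSection_of_ae_exists_ne_zero herg
    (fun j => isInvariantSection_sub_of_coboundary_ae_eq (hcob j))
    (fun j => (hξ' j).sub ((lp.lipschitzWith_one_eval 2 j).continuous.measurable.comp hΞ)) ?_
  filter_upwards [ae_all_iff.2 fun n => (hξ n).2] with x hx
  exact lp.exists_nsmul_sub_apply_ne_zero two_ne_zero (fun j => hx (φ j)) (Ξ x)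

/-- If the ergodic action of a countable discrete group `G` on a standard Borel probability
space `(X, μ)` with quasi-invariant `μ` is such that, for every representation `L` of `X ⋊ G`
on a separable complex Hilbert space, every `L`-cocycle is an `L`-coboundary, then the action
has property (T). -/
theorem vanishing_cohomology_implies_propertyT
    {G X : Type*} [Group G] [Countable G]
    [MeasurableSpace X] [StandardBorelSpace X] [MulAction G X]
    (μ : Measure X) [IsProbabilityMeasure μ]
    (hqi : QuasiInvariantAction G μ) (herg : IsErgodicSMulAction G μ)
    (hvanish : ∀ (K : Type) [NormedAddCommGroup K] [InnerProductSpace ℂ K]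
      [CompleteSpace K] [SecondCountableTopology K] [MeasurableSpace K] [BorelSpace K]
      (L : X → G → (K ≃ₗᵢ[ℂ] K)), IsGroupoidRep μ L →
      ∀ b : X → G → K, IsLCocycle μ L b → IsLCoboundary μ L b) :
    ActionHasPropertyT G μ :=
  vanishing_cohomology_implies_propertyT_general μ hqi herg hvanish
end

section
/- Let the action of G on (X, μ) be ergodic, let L be a representation of X⋊G on a separable complex Hilbert space K, and let b be an L-cocycle. Then the following are equivalent: (i) b is an L-coboundary; (ii) there exists a measurable E ⊆ X with μ(E) > 0 such that sup{ ‖b(x,g)‖ : g ∈ G, x ∈ E, g⁻¹•x ∈ E } < ∞; (iii) there exists a measurable E ⊆ X with μ(E) > 0 such that for every x ∈ E, sup{ ‖b(x,g)‖ : g ∈ G, g⁻¹•x ∈ E } < ∞. -/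
/-!
(i) ⇒ (ii): if `b = ∂ξ` (written `lCoboundary L ξ` below), then `b` is bounded by `2N` on
pairs of points of `{‖ξ‖ ≤ N}`, and some such set has positive measure. (iii) ⇒ (ii): exhaust
`E` by the sets where the pointwise bound is at most `N`.

(ii) ⇒ (i): by ergodicity almost every orbit meets `E`, so one can choose measurably `γ x`
with `(γ x)⁻¹ • x ∈ E`; subtracting the coboundary of `ξ x = b x (γ x)` leaves a cocycle `c`
that is bounded almost everywhere. For such `c` the cocycle identity says that the orbit
`{c x g}_g` is the image of the orbit at `g⁻¹ • x` under the affine isometry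
`v ↦ c x g + L x g v`. Hence the Chebyshev centres `η x` of these bounded sets (unique in a
Hilbert space by the parallelogram law, and measurable as limits of approximate centres picked
from a dense sequence) satisfy `c = ∂η`.
-/

open MeasureTheory Filter Topology
open scoped Pointwise symmDiff InnerProductSpace ENNReal

open Set Bornology Metric

section Chebyshev

variable {ι α : Type*} [PseudoMetricSpace α]

/-- Only meaningful for bounded `f`: an unbounded `⨆` of reals is `0`. -/
noncomputable def chebyshevRadiusAt (f : ι → α) (z : α) : ℝ := ⨆ i, dist z (f i)

noncomputable def chebyshevRadius (f : ι → α) : ℝ := ⨅ z, chebyshevRadiusAt f z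

def IsChebyshevCenter (f : ι → α) (z : α) : Prop := chebyshevRadiusAt f z = chebyshevRadius f

variable {f f' : ι → α}

lemma chebyshevRadiusAt_nonneg (f : ι → α) (z : α) : 0 ≤ chebyshevRadiusAt f z :=
  Real.iSup_nonneg fun _ => dist_nonneg

lemma dist_le_chebyshevRadiusAt (hf : IsBounded (range f)) (z : α) (i : ι) :
    dist z (f i) ≤ chebyshevRadiusAt f z := by
  obtain ⟨C, hC⟩ := (isBounded_iff_subset_closedBall z).1 hf
  exact le_ciSup ⟨C, forall_mem_range.2 fun j => mem_closedBall'.1 (hC (mem_range_self j))⟩ i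

lemma chebyshevRadius_le (f : ι → α) (z : α) : chebyshevRadius f ≤ chebyshevRadiusAt f z :=
  ciInf_le ⟨0, forall_mem_range.2 (chebyshevRadiusAt_nonneg f)⟩ z

lemma chebyshevRadius_nonneg (f : ι → α) : 0 ≤ chebyshevRadius f :=
  Real.iInf_nonneg (chebyshevRadiusAt_nonneg f)

lemma lipschitzWith_chebyshevRadiusAt (hf : IsBounded (range f)) :
    LipschitzWith 1 (chebyshevRadiusAt f) :=
  LipschitzWith.of_le_add fun z z' =>
    Real.iSup_le (fun i => (dist_triangle z z' (f i)).trans <| by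
        rw [add_comm]; exact add_le_add_left (dist_le_chebyshevRadiusAt hf z' i) _)
      (add_nonneg (chebyshevRadiusAt_nonneg f z') dist_nonneg)

lemma DenseRange.iInf_chebyshevRadiusAt {d : ℕ → α} (hd : DenseRange d)
    (hf : IsBounded (range f)) : ⨅ k, chebyshevRadiusAt f (d k) = chebyshevRadius f := by
  have : Nonempty α := ⟨d 0⟩
  have hcont := (lipschitzWith_chebyshevRadiusAt hf).continuous
  refine le_antisymm (le_of_forall_gt fun r hr => ?_) (le_ciInf fun k => chebyshevRadius_le f _)
  obtain ⟨z, hz⟩ := exists_lt_of_ciInf_lt hr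
  obtain ⟨k, hk⟩ := hd.exists_mem_open (isOpen_lt hcont continuous_const) ⟨z, hz⟩
  exact (ciInf_le ⟨0, forall_mem_range.2 fun _ => chebyshevRadiusAt_nonneg f _⟩ k).trans_lt hk

lemma chebyshevRadiusAt_of_forall_eq_apply (Φ : α ≃ᵢ α) (σ : ι ≃ ι)
    (h : ∀ i, f (σ i) = Φ (f' i)) (z : α) :
    chebyshevRadiusAt f (Φ z) = chebyshevRadiusAt f' z := by
  rw [chebyshevRadiusAt, ← σ.iSup_comp]
  simp only [h, Φ.dist_eq]
  rfl

lemma chebyshevRadius_of_forall_eq_apply (Φ : α ≃ᵢ α) (σ : ι ≃ ι)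
    (h : ∀ i, f (σ i) = Φ (f' i)) : chebyshevRadius f = chebyshevRadius f' := by
  rw [chebyshevRadius, ← Φ.surjective.iInf_comp]
  simp only [chebyshevRadiusAt_of_forall_eq_apply Φ σ h]
  rfl

lemma IsChebyshevCenter.of_forall_eq_apply (Φ : α ≃ᵢ α) (σ : ι ≃ ι)
    (h : ∀ i, f (σ i) = Φ (f' i)) {z : α} (hz : IsChebyshevCenter f' z) :
    IsChebyshevCenter f (Φ z) := by
  rw [IsChebyshevCenter, chebyshevRadiusAt_of_forall_eq_apply Φ σ h,
    chebyshevRadius_of_forall_eq_apply Φ σ h]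
  exact hz

lemma isChebyshevCenter_of_tendsto (hf : IsBounded (range f)) {z : ℕ → α} {c : α}
    (hmin : Tendsto (fun n => chebyshevRadiusAt f (z n)) atTop (𝓝 (chebyshevRadius f)))
    (hz : Tendsto z atTop (𝓝 c)) : IsChebyshevCenter f c :=
  tendsto_nhds_unique
    (((lipschitzWith_chebyshevRadiusAt hf).continuous.tendsto c).comp hz) hmin

end Chebyshev

section ChebyshevInner

variable {ι E : Type*} [NormedAddCommGroup E] [InnerProductSpace ℝ E] {f : ι → E}

/-- By Apollonius, the midpoint of two points at which `chebyshevRadiusAt f` is at most `r`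
lies within `√(r² - d²/4)` of every `f i`, where `d` is their distance. -/
lemma dist_sq_le_of_chebyshevRadiusAt_le [Nonempty ι] (hf : IsBounded (range f)) {z z' : E}
    {r : ℝ} (hz : chebyshevRadiusAt f z ≤ r) (hz' : chebyshevRadiusAt f z' ≤ r) :
    dist z z' ^ 2 ≤ 4 * (r ^ 2 - chebyshevRadius f ^ 2) := by
  set m := midpoint ℝ z z'
  have hm : ∀ i, dist (f i) m ^ 2 ≤ r ^ 2 - (dist z z' / 2) ^ 2 := fun i => by
    have hA := EuclideanGeometry.dist_sq_add_dist_sq_eq_two_mul_dist_midpoint_sq_add_half_dist_sq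
      (f i) z z'
    have h1 := (dist_le_chebyshevRadiusAt hf z i).trans hz
    have h2 := (dist_le_chebyshevRadiusAt hf z' i).trans hz'
    rw [dist_comm] at h1 h2
    nlinarith [dist_nonneg (x := f i) (y := z), dist_nonneg (x := f i) (y := z')]
  have hM : 0 ≤ r ^ 2 - (dist z z' / 2) ^ 2 :=
    (sq_nonneg _).trans (hm (Classical.arbitrary ι))
  have hRm : chebyshevRadiusAt f m ≤ √(r ^ 2 - (dist z z' / 2) ^ 2) :=
    ciSup_le fun i => by
      rw [dist_comm]
      exact Real.le_sqrt_of_sq_le (hm i)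
  have hρ : chebyshevRadius f ^ 2 ≤ r ^ 2 - (dist z z' / 2) ^ 2 := by
    calc chebyshevRadius f ^ 2 ≤ √(r ^ 2 - (dist z z' / 2) ^ 2) ^ 2 :=
          pow_le_pow_left₀ (chebyshevRadius_nonneg f)
            ((chebyshevRadius_le f m).trans hRm) 2
      _ = _ := Real.sq_sqrt hM
  nlinarith

lemma IsChebyshevCenter.eq [Nonempty ι] (hf : IsBounded (range f)) {z z' : E}
    (hz : IsChebyshevCenter f z) (hz' : IsChebyshevCenter f z') : z = z' := by
  have h := dist_sq_le_of_chebyshevRadiusAt_le hf hz.le hz'.le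
  rw [sub_self, mul_zero] at h
  exact dist_le_zero.1 (by nlinarith [dist_nonneg (x := z) (y := z')])

lemma cauchySeq_of_tendsto_chebyshevRadiusAt [Nonempty ι] (hf : IsBounded (range f))
    {z : ℕ → E}
    (hmin : Tendsto (fun n => chebyshevRadiusAt f (z n)) atTop (𝓝 (chebyshevRadius f))) :
    CauchySeq z := by
  set ρ := chebyshevRadius f
  set R := fun n => chebyshevRadiusAt f (z n)
  have hmax : Tendsto (fun p : ℕ × ℕ => max (R p.1) (R p.2)) atTop (𝓝 ρ) := by
    rw [← prod_atTop_atTop_eq]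
    have h := (hmin.comp tendsto_fst).max (hmin.comp tendsto_snd)
    rw [max_self] at h
    exact h
  have hbound : Tendsto (fun p : ℕ × ℕ => √(4 * (max (R p.1) (R p.2) ^ 2 - ρ ^ 2)))
      atTop (𝓝 0) := by
    have := (((hmax.pow 2).sub_const (ρ ^ 2)).const_mul 4).sqrt
    rwa [sub_self, mul_zero, Real.sqrt_zero] at this
  refine cauchySeq_iff_tendsto_dist_atTop_0.2 (squeeze_zero (fun _ => dist_nonneg) (fun p => ?_)
    hbound)
  exact Real.le_sqrt_of_sq_le
    (dist_sq_le_of_chebyshevRadiusAt_le hf (le_max_left _ _) (le_max_right _ _))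

lemma exists_isChebyshevCenter_tendsto [Nonempty ι] [CompleteSpace E]
    (hf : IsBounded (range f)) {z : ℕ → E}
    (hmin : Tendsto (fun n => chebyshevRadiusAt f (z n)) atTop (𝓝 (chebyshevRadius f))) :
    ∃ c, IsChebyshevCenter f c ∧ Tendsto z atTop (𝓝 c) :=
  let ⟨c, hc⟩ := cauchySeq_tendsto_of_complete (cauchySeq_of_tendsto_chebyshevRadiusAt hf hmin)
  ⟨c, isChebyshevCenter_of_tendsto hf hmin hc, hc⟩

theorem exists_measurable_isChebyshevCenter {X : Type*} [MeasurableSpace X] [Countable ι]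
    [Nonempty ι] [CompleteSpace E] [SecondCountableTopology E] [MeasurableSpace E]
    [BorelSpace E] {F : X → ι → E} (hF : ∀ i, Measurable fun x => F x i)
    (hb : ∀ x, IsBounded (range (F x))) :
    ∃ η : X → E, Measurable η ∧ ∀ x, IsChebyshevCenter (F x) (η x) := by
  classical
  obtain ⟨d, hd⟩ := TopologicalSpace.exists_dense_seq E
  have hR (z : E) : Measurable fun x => chebyshevRadiusAt (F x) z :=
    Measurable.iSup fun i => measurable_const.dist (hF i)
  have hρ : Measurable fun x => chebyshevRadius (F x) := by
    simp only [← hd.iInf_chebyshevRadiusAt (hb _)]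
    exact Measurable.iInf fun k => hR (d k)
  have hex (x : X) (n : ℕ) :
      ∃ k, chebyshevRadiusAt (F x) (d k) < chebyshevRadius (F x) + 1 / (n + 1) := by
    refine exists_lt_of_ciInf_lt ?_
    rw [hd.iInf_chebyshevRadiusAt (hb x)]
    exact lt_add_of_pos_right _ Nat.one_div_pos_of_nat
  set z : ℕ → X → E := fun n x => d (Nat.find (hex x n))
  have hz (n : ℕ) : Measurable (z n) :=
    measurable_from_nat.comp
      (measurable_find _ fun k => measurableSet_lt (hR (d k)) (hρ.add_const _))
  have hmin (x : X) : Tendsto (fun n => chebyshevRadiusAt (F x) (z n x)) atTop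
      (𝓝 (chebyshevRadius (F x))) := by
    refine tendsto_of_tendsto_of_tendsto_of_le_of_le tendsto_const_nhds ?_
      (fun n => chebyshevRadius_le _ _) (fun n => (Nat.find_spec (hex x n)).le)
    simpa using (tendsto_const_nhds (x := chebyshevRadius (F x))).add
      tendsto_one_div_add_atTop_nhds_zero_nat
  choose η hη hlim using fun x => exists_isChebyshevCenter_tendsto (hb x) (hmin x)
  exact ⟨η, measurable_of_tendsto_metrizable hz (tendsto_pi_nhds.2 hlim), hη⟩

end ChebyshevInner

lemma measurable_apply_of_continuous {X K K' : Type*} [MeasurableSpace X] [TopologicalSpace K]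
    [TopologicalSpace.MetrizableSpace K] [SecondCountableTopology K] [MeasurableSpace K]
    [OpensMeasurableSpace K] [TopologicalSpace K'] [TopologicalSpace.PseudoMetrizableSpace K']
    [MeasurableSpace K'] [BorelSpace K'] {T : X → K → K'} (hcont : ∀ x, Continuous (T x))
    (hmeas : ∀ v, Measurable fun x => T x v) {φ : X → K} (hφ : Measurable φ) :
    Measurable fun x => T x (φ x) :=
  (measurable_uncurry_of_continuous_of_measurable (u := fun v x => T x v) hcont hmeas).comp
    (hφ.prodMk measurable_id)

lemma exists_nat_measure_pos_inter {X : Type*} [MeasurableSpace X] {μ : Measure X}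
    {E : Set X} (hE : 0 < μ E) {p : X → ℝ → Prop} (hp : ∀ x C C', C ≤ C' → p x C → p x C')
    (h : ∀ x ∈ E, ∃ C, p x C) :
    ∃ N : ℕ, 0 < μ (E ∩ {x | p x N}) := by
  refine exists_measure_pos_of_not_measure_iUnion_null fun h0 => hE.ne' <|
    measure_mono_null (fun x hx => ?_) h0
  obtain ⟨C, hC⟩ := h x hx
  obtain ⟨N, hN⟩ := exists_nat_ge C
  exact mem_iUnion.2 ⟨N, hx, hp x C N hN hC⟩

section Action

variable {G X : Type*} [Group G] [MulAction G X]

lemma smul_setOf_exists_inv_smul_mem (E : Set X) (g : G) :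
    g • {x : X | ∃ h : G, h⁻¹ • x ∈ E} = {x | ∃ h : G, h⁻¹ • x ∈ E} := by
  ext x
  simp only [mem_smul_set_iff_inv_smul_mem, mem_ofPred_eq, smul_smul, ← mul_inv_rev]
  exact ⟨fun ⟨h, hh⟩ => ⟨g * h, hh⟩, fun ⟨h, hh⟩ => ⟨g⁻¹ * h, by simpa using hh⟩⟩

variable [MeasurableSpace X] {μ : Measure X}

lemma QuasiInvariantAction.quasiMeasurePreserving (hqi : QuasiInvariantAction G μ) (g : G) :
    Measure.QuasiMeasurePreserving (g • · : X → X) μ μ :=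
  ⟨hqi.1 g, (hqi.2 g).1⟩

lemma IsErgodicSMulAction.ae_mem [IsProbabilityMeasure μ] (herg : IsErgodicSMulAction G μ)
    {W : Set X} (hW : MeasurableSet W) (hinv : ∀ g : G, g • W = W) (h0 : μ W ≠ 0) :
    ∀ᵐ x ∂μ, x ∈ W := by
  rcases herg W hW fun g => by simp [hinv g] with hW0 | hW1
  · exact absurd hW0 h0
  · exact ae_iff.2 ((prob_compl_eq_zero_iff hW).2 hW1)

lemma measurableSet_exists_inv_smul_mem [Countable G]
    (hmeas : ∀ g : G, Measurable (g • · : X → X)) {E : Set X} (hE : MeasurableSet E) :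
    MeasurableSet {x : X | ∃ g : G, g⁻¹ • x ∈ E} := by
  rw [ofPred_exists]
  exact MeasurableSet.iUnion fun g => hmeas g⁻¹ hE

lemma IsErgodicSMulAction.ae_exists_inv_smul_mem [Countable G] [IsProbabilityMeasure μ]
    (hqi : QuasiInvariantAction G μ) (herg : IsErgodicSMulAction G μ) {E : Set X}
    (hE : MeasurableSet E) (hE0 : μ E ≠ 0) : ∀ᵐ x ∂μ, ∃ g : G, g⁻¹ • x ∈ E :=
  herg.ae_mem (measurableSet_exists_inv_smul_mem hqi.1 hE) (smul_setOf_exists_inv_smul_mem E)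
    fun h => hE0 <| measure_mono_null
      (fun x hx => show ∃ g : G, g⁻¹ • x ∈ E from ⟨1, by simpa using hx⟩) h

lemma exists_measurable_inv_smul_mem [MeasurableSpace G] [Countable G]
    (hmeas : ∀ g : G, Measurable (g • · : X → X)) {E : Set X} (hE : MeasurableSet E) :
    ∃ γ : X → G, Measurable γ ∧ ∀ x, (∃ g : G, g⁻¹ • x ∈ E) → (γ x)⁻¹ • x ∈ E := by
  classical
  obtain ⟨e, he⟩ := exists_surjective_nat G
  set W := {x : X | ∃ g : G, g⁻¹ • x ∈ E}
  have hex (x : X) : ∃ n, (e n)⁻¹ • x ∈ E ∨ x ∉ W := by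
    by_cases hx : x ∈ W
    · obtain ⟨g, hg⟩ := hx
      obtain ⟨n, rfl⟩ := he g
      exact ⟨n, Or.inl hg⟩
    · exact ⟨0, Or.inr hx⟩
  refine ⟨fun x => e (Nat.find (hex x)), measurable_from_nat.comp (measurable_find _ fun n => ?_),
    fun x hx => (Nat.find_spec (hex x)).resolve_right (not_not.2 hx)⟩
  exact (hmeas (e n)⁻¹ hE).union (measurableSet_exists_inv_smul_mem hmeas hE).compl

end Action

section LCoboundary

variable {G X K : Type*} [Group G] [MulAction G X] [NormedAddCommGroup K]
  [InnerProductSpace ℂ K]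

def lCoboundary (L : X → G → (K ≃ₗᵢ[ℂ] K)) (ξ : X → K) : X → G → K :=
  fun x g => ξ x - L x g (ξ (g⁻¹ • x))

lemma lCoboundary_add (L : X → G → (K ≃ₗᵢ[ℂ] K)) (ξ η : X → K) :
    lCoboundary L (ξ + η) = lCoboundary L ξ + lCoboundary L η := by
  ext x g
  simp only [lCoboundary, Pi.add_apply, map_add]
  abel

/-- With `a = γ x` and `a' = γ (g⁻¹ • x)`, the cocycle identity rewrites the value at `(x, g)`
as `L(x, a) b(a⁻¹ • x, a⁻¹ g a')`, whose two base points `a⁻¹ • x` and `a'⁻¹ g⁻¹ • x` lie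
in `E`. -/
lemma norm_sub_lCoboundary_le {L : X → G → (K ≃ₗᵢ[ℂ] K)} {b : X → G → K} {E : Set X} {C : ℝ}
    (hC : ∀ x ∈ E, ∀ g : G, g⁻¹ • x ∈ E → ‖b x g‖ ≤ C) {x : X}
    (hbx : ∀ g₁ g₂ : G, b x (g₁ * g₂) = b x g₁ + L x g₁ (b (g₁⁻¹ • x) g₂))
    {γ : X → G} {g : G} (hx : (γ x)⁻¹ • x ∈ E) (hgx : (γ (g⁻¹ • x))⁻¹ • g⁻¹ • x ∈ E) :
    ‖(b - lCoboundary L fun y => b y (γ y)) x g‖ ≤ C := by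
  set a := γ x
  set a' := γ (g⁻¹ • x)
  have hval : (b - lCoboundary L fun y => b y (γ y)) x g =
      L x a (b (a⁻¹ • x) (a⁻¹ * (g * a'))) := by
    have h := hbx a (a⁻¹ * (g * a'))
    rw [mul_inv_cancel_left, hbx g a'] at h
    simp only [Pi.sub_apply, lCoboundary]
    rw [← add_sub_cancel_left (b x a) (L x a _), ← h]
    abel
  rw [hval, LinearIsometryEquiv.norm_map]
  refine hC _ hx _ ?_
  convert hgx using 1
  rw [smul_smul, smul_smul]
  congr 1
  group

variable [MeasurableSpace X] [MeasurableSpace K] [BorelSpace K] [SecondCountableTopology K]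
  {μ : Measure X} {L : X → G → (K ≃ₗᵢ[ℂ] K)}

lemma measurable_lCoboundary (hmeas : ∀ g : G, Measurable (g • · : X → X))
    (hL : IsGroupoidRep μ L) {ξ : X → K} (hξ : Measurable ξ) (g : G) :
    Measurable fun x => lCoboundary L ξ x g :=
  hξ.sub (measurable_apply_of_continuous (fun x => (L x g).continuous) (hL.1 g)
    (hξ.comp (hmeas g⁻¹)))

lemma IsLCocycle.sub_lCoboundary (hmeas : ∀ g : G, Measurable (g • · : X → X))
    (hL : IsGroupoidRep μ L) {b : X → G → K} (hb : IsLCocycle μ L b) {ξ : X → K}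
    (hξ : Measurable ξ) : IsLCocycle μ L (b - lCoboundary L ξ) := by
  refine ⟨fun g => (hb.1 g).sub (measurable_lCoboundary hmeas hL hξ g), fun g₁ g₂ => ?_⟩
  filter_upwards [hb.2 g₁ g₂, hL.2 g₁ g₂] with x hbx hLx
  simp only [Pi.sub_apply, lCoboundary, hbx, hLx, mul_inv_rev, mul_smul, map_sub]
  abel

lemma IsLCoboundary.of_sub_lCoboundary {b : X → G → K} {ξ : X → K} (hξ : Measurable ξ)
    (h : IsLCoboundary μ L (b - lCoboundary L ξ)) : IsLCoboundary μ L b := by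
  obtain ⟨η, hη, hbη⟩ := h
  refine ⟨ξ + η, hξ.add hη, fun g => ?_⟩
  filter_upwards [hbη g] with x hx
  have := congr_fun (congr_fun (lCoboundary_add L ξ η) x) g
  simp only [Pi.sub_apply, Pi.add_apply, lCoboundary] at hx this ⊢
  rw [this, ← hx]
  abel

theorem IsLCocycle.isLCoboundary_of_ae_norm_le [Countable G] [CompleteSpace K]
    (hqi : QuasiInvariantAction G μ) {c : X → G → K}
    (hc : IsLCocycle μ L c) {C : ℝ} (hC : ∀ᵐ x ∂μ, ∀ g, ‖c x g‖ ≤ C) :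
    IsLCoboundary μ L c := by
  classical
  let _ : InnerProductSpace ℝ K := InnerProductSpace.complexToReal
  set c' : X → G → K := fun x g => if ‖c x g‖ ≤ C then c x g else 0
  have hc'm (g : G) : Measurable fun x => c' x g :=
    Measurable.ite (measurableSet_le (hc.1 g).norm measurable_const) (hc.1 g) measurable_const
  have hc'b (x : X) : IsBounded (range (c' x)) := by
    refine isBounded_iff_forall_norm_le.2 ⟨max C 0, forall_mem_range.2 fun g => ?_⟩
    by_cases h : ‖c x g‖ ≤ C <;> simp [c', h]
  obtain ⟨η, hηm, hη⟩ := exists_measurable_isChebyshevCenter hc'm hc'b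
  set P : X → Prop := fun x =>
    (∀ g h : G, c x (g * h) = c x g + L x g (c (g⁻¹ • x) h)) ∧ ∀ g, c' x g = c x g
  have hP : ∀ᵐ x ∂μ, P x := by
    filter_upwards [ae_all_iff.2 fun g => ae_all_iff.2 (hc.2 g), hC] with x hcx hCx
    exact ⟨hcx, fun g => if_pos (hCx g)⟩
  refine ⟨η, hηm, fun g => ?_⟩
  filter_upwards [hP, (hqi.quasiMeasurePreserving g⁻¹).ae hP] with x hx hgx
  set Φ : K ≃ᵢ K := (L x g).toIsometryEquiv.trans (IsometryEquiv.addLeft (c x g))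
  have horbit (h : G) : c' x (Equiv.mulLeft g h) = Φ (c' (g⁻¹ • x) h) := by
    simp [Φ, hx.2, hgx.2, hx.1]
  have := (hη x).eq (hc'b x) ((hη (g⁻¹ • x)).of_forall_eq_apply Φ (Equiv.mulLeft g) horbit)
  simp only [Φ, IsometryEquiv.trans_apply, IsometryEquiv.addLeft_apply,
    LinearIsometryEquiv.coe_toIsometryEquiv] at this
  rw [this]
  abel

end LCoboundary

section Bounded

variable {G X K : Type*} [Group G] [MulAction G X] [MeasurableSpace X] {μ : Measure X}
  [NormedAddCommGroup K]

lemma exists_norm_le_on_of_forall_exists_norm_le [Countable G]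
    {b : X → G → K} (hmeas : ∀ g : G, Measurable (g • · : X → X))
    (hb : ∀ g, Measurable fun x => ‖b x g‖)
    {E : Set X} (hE : MeasurableSet E) (hE0 : 0 < μ E)
    (h : ∀ x ∈ E, ∃ C : ℝ, ∀ g : G, g⁻¹ • x ∈ E → ‖b x g‖ ≤ C) :
    ∃ E' : Set X, MeasurableSet E' ∧ 0 < μ E' ∧
      ∃ C : ℝ, ∀ x ∈ E', ∀ g : G, g⁻¹ • x ∈ E' → ‖b x g‖ ≤ C := by
  obtain ⟨N, hN⟩ := exists_nat_measure_pos_inter hE0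
    (fun x C C' hCC' hC g hg => (hC g hg).trans hCC') h
  refine ⟨_, hE.inter ?_, hN, N, fun x hx g hg => hx.2 g hg.1⟩
  exact measurableSet_setOfPred.2 <| Measurable.forall fun g =>
    (measurableSet_setOfPred.1 (hmeas g⁻¹ hE)).imp
      (measurableSet_setOfPred.1 (measurableSet_le (hb g) measurable_const))

variable [InnerProductSpace ℂ K] [MeasurableSpace K] {L : X → G → (K ≃ₗᵢ[ℂ] K)}
  {b : X → G → K}

lemma IsLCoboundary.exists_norm_le_on [Countable G] [OpensMeasurableSpace K] [NeZero μ]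
    (h : IsLCoboundary μ L b) :
    ∃ E : Set X, MeasurableSet E ∧ 0 < μ E ∧
      ∃ C : ℝ, ∀ x ∈ E, ∀ g : G, g⁻¹ • x ∈ E → ‖b x g‖ ≤ C := by
  obtain ⟨ξ, hξ, hbξ⟩ := h
  obtain ⟨s, hs, hsm, hsb⟩ := (ae_all_iff.2 hbξ).exists_measurable_mem
  have hs0 : 0 < μ s := pos_iff_ne_zero.2 fun h0 => by
    simpa using inter_mem hs (compl_mem_ae_iff.2 h0)
  obtain ⟨N, hN⟩ := exists_nat_measure_pos_inter hs0 (p := fun x C => ‖ξ x‖ ≤ C)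
    (fun x C C' hCC' hC => hC.trans hCC') fun x _ => ⟨_, le_rfl⟩
  refine ⟨s ∩ {x | ‖ξ x‖ ≤ N}, hsm.inter (measurableSet_le hξ.norm measurable_const), hN,
    N + N, ?_⟩
  rintro x ⟨hxs, hx⟩ g ⟨-, hgx⟩
  calc ‖b x g‖ = ‖ξ x - L x g (ξ (g⁻¹ • x))‖ := by rw [hsb x hxs g]
    _ ≤ ‖ξ x‖ + ‖ξ (g⁻¹ • x)‖ := by simpa using norm_sub_le (ξ x) (L x g (ξ (g⁻¹ • x)))
    _ ≤ N + N := add_le_add hx hgx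

theorem IsLCocycle.isLCoboundary_of_norm_le_on [Countable G] [IsProbabilityMeasure μ]
    [BorelSpace K] [CompleteSpace K] [SecondCountableTopology K] (hqi : QuasiInvariantAction G μ)
    (herg : IsErgodicSMulAction G μ) (hL : IsGroupoidRep μ L) (hb : IsLCocycle μ L b)
    {E : Set X} (hE : MeasurableSet E) (hE0 : μ E ≠ 0) {C : ℝ}
    (hC : ∀ x ∈ E, ∀ g : G, g⁻¹ • x ∈ E → ‖b x g‖ ≤ C) : IsLCoboundary μ L b := by
  let _ : MeasurableSpace G := ⊤
  obtain ⟨γ, hγm, hγ⟩ := exists_measurable_inv_smul_mem hqi.1 hE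
  have hξ : Measurable fun x => b x (γ x) :=
    (measurable_from_prod_countable_left (f := fun p : X × G => b p.1 p.2) hb.1).comp
      (measurable_id.prodMk hγm)
  refine IsLCoboundary.of_sub_lCoboundary hξ ?_
  refine (hb.sub_lCoboundary hqi.1 hL hξ).isLCoboundary_of_ae_norm_le hqi (C := C) ?_
  filter_upwards [ae_all_iff.2 fun g => ae_all_iff.2 (hb.2 g),
    herg.ae_exists_inv_smul_mem hqi hE hE0] with x hbx ⟨h, hh⟩ g
  refine norm_sub_lCoboundary_le hC hbx (hγ x ⟨h, hh⟩) (hγ _ ⟨g⁻¹ * h, ?_⟩)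
  rwa [mul_inv_rev, inv_inv, mul_smul, smul_inv_smul]

end Bounded

theorem coboundary_tfae_general
    {G X : Type*} [Group G] [Countable G]
    [MeasurableSpace X] [MulAction G X]
    (μ : Measure X) [IsProbabilityMeasure μ]
    (hqi : QuasiInvariantAction G μ) (herg : IsErgodicSMulAction G μ)
    {K : Type*} [NormedAddCommGroup K] [InnerProductSpace ℂ K]
    [CompleteSpace K] [SecondCountableTopology K] [MeasurableSpace K] [BorelSpace K]
    (L : X → G → (K ≃ₗᵢ[ℂ] K)) (hL : IsGroupoidRep μ L)
    (b : X → G → K) (hb : IsLCocycle μ L b) :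
    List.TFAE
      [IsLCoboundary μ L b,
       ∃ E : Set X, MeasurableSet E ∧ 0 < μ E ∧
         ∃ C : ℝ, ∀ x ∈ E, ∀ g : G, g⁻¹ • x ∈ E → ‖b x g‖ ≤ C,
       ∃ E : Set X, MeasurableSet E ∧ 0 < μ E ∧
         ∀ x ∈ E, ∃ C : ℝ, ∀ g : G, g⁻¹ • x ∈ E → ‖b x g‖ ≤ C] := by
  tfae_have 1 → 2 := IsLCoboundary.exists_norm_le_on
  tfae_have 2 → 1 := fun ⟨E, hE, hE0, C, hC⟩ =>
    hb.isLCoboundary_of_norm_le_on hqi herg hL hE hE0.ne' hC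
  tfae_have 2 → 3 := fun ⟨E, hE, hE0, C, hC⟩ => ⟨E, hE, hE0, fun x hx => ⟨C, hC x hx⟩⟩
  tfae_have 3 → 2 := fun ⟨E, hE, hE0, h⟩ =>
    exists_norm_le_on_of_forall_exists_norm_le hqi.1 (fun g => (hb.1 g).norm) hE hE0 h
  tfae_finish

/-- For an ergodic quasi-invariant action of a countable discrete group `G` on a standard
Borel probability space `(X, μ)`, a representation `L` of `X ⋊ G` on a separable complex
Hilbert space and an `L`-cocycle `b`, the following are equivalent:
(i) `b` is an `L`-coboundary;
(ii) there is a positive-measure measurable `E ⊆ X` with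
`sup { ‖b(x,g)‖ : g ∈ G, x ∈ E, g⁻¹ • x ∈ E } < ∞`;
(iii) there is a positive-measure measurable `E ⊆ X` such that for every `x ∈ E`,
`sup { ‖b(x,g)‖ : g ∈ G, g⁻¹ • x ∈ E } < ∞`. -/
theorem coboundary_tfae
    {G X : Type*} [Group G] [Countable G]
    [MeasurableSpace X] [StandardBorelSpace X] [MulAction G X]
    (μ : Measure X) [IsProbabilityMeasure μ]
    (hqi : QuasiInvariantAction G μ) (herg : IsErgodicSMulAction G μ)
    {K : Type*} [NormedAddCommGroup K] [InnerProductSpace ℂ K]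
    [CompleteSpace K] [SecondCountableTopology K] [MeasurableSpace K] [BorelSpace K]
    (L : X → G → (K ≃ₗᵢ[ℂ] K)) (hL : IsGroupoidRep μ L)
    (b : X → G → K) (hb : IsLCocycle μ L b) :
    List.TFAE
      [IsLCoboundary μ L b,
       ∃ E : Set X, MeasurableSet E ∧ 0 < μ E ∧
         ∃ C : ℝ, ∀ x ∈ E, ∀ g : G, g⁻¹ • x ∈ E → ‖b x g‖ ≤ C,
       ∃ E : Set X, MeasurableSet E ∧ 0 < μ E ∧
         ∀ x ∈ E, ∃ C : ℝ, ∀ g : G, g⁻¹ • x ∈ E → ‖b x g‖ ≤ C] :=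
  coboundary_tfae_general μ hqi herg L hL b hb
end

section
/- Let the action of G on (S, μ) be ergodic and have property T. Let H be a locally compact second countable group with left Haar measure λ, and let α : S × G → H be a map with s ↦ α(s,g) measurable for each g ∈ G, satisfying the strict cocycle identity α(s, g₁g₂) = α(s, g₁) α(g₁⁻¹•s, g₂) for all s ∈ S and g₁, g₂ ∈ G. Consider the skew-product action of G on (S × H, μ ⊗ λ) given by g•(s, h) = (g•s, α(g•s, g) h), which is a quasi-invariant action. If the skew-product action is ergodic, then the group H has property T. -/
open MeasureTheory Filter Topology
open scoped Pointwise symmDiff InnerProductSpace ENNReal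

/-- Property (T) for a locally compact group `H`: every strongly continuous unitary
representation of `H` on a separable complex Hilbert space with almost invariant unit
vectors (uniformly on compact sets) has a nonzero invariant vector. -/
def LCGroupHasPropertyT (H : Type*) [Group H] [TopologicalSpace H] : Prop :=
  ∀ (K : Type) [NormedAddCommGroup K] [InnerProductSpace ℂ K]
    [CompleteSpace K] [SecondCountableTopology K]
    (π : H →* (K ≃ₗᵢ[ℂ] K)),
    (∀ v : K, Continuous fun h : H => π h v) →
    (∀ Q : Set H, IsCompact Q → ∀ ε : ℝ, 0 < ε →
      ∃ ξ : K, ‖ξ‖ = 1 ∧ ∀ h ∈ Q, ‖π h ξ - ξ‖ < ε) →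
    ∃ v : K, v ≠ 0 ∧ ∀ h : H, π h v = v

/-
Property (T) of the action turns almost invariant vectors of a unitary representation `π` of `H`
into an invariant unit section `ξ` of the groupoid representation `(s, g) ↦ π (α s g)`. The
function `(s, h) ↦ π h⁻¹ (ξ s)` is then invariant under the skew-product action, so by its
ergodicity it is a.e. equal to a constant `v₀`. By Fubini, `π h v₀ = ξ s` for some `s` with
`‖ξ s‖ = 1` and almost every `h`, and left invariance of Haar measure makes `ξ s` invariant.
-/

section StrictCocycle

variable {G S H : Type*} [Group G] [MulAction G S] [Group H]

def IsStrictCocycle (α : S → G → H) : Prop :=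
  ∀ (s : S) (g₁ g₂ : G), α s (g₁ * g₂) = α s g₁ * α (g₁⁻¹ • s) g₂

namespace IsStrictCocycle

variable {α : S → G → H}

theorem apply_one (hα : IsStrictCocycle α) (s : S) : α s 1 = 1 := by
  simpa using hα s 1 1

theorem apply_inv_mul_apply_smul (hα : IsStrictCocycle α) (s : S) (g : G) :
    α s g⁻¹ * α (g • s) g = 1 := by
  simpa [hα.apply_one] using (hα s g⁻¹ g).symm

end IsStrictCocycle

def skewProductMap (α : S → G → H) (g : G) (p : S × H) : S × H :=
  (g • p.1, α (g • p.1) g * p.2)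

theorem skewProductMap_inv_apply {α : S → G → H} (hα : IsStrictCocycle α) (g : G) (p : S × H) :
    skewProductMap α g⁻¹ (skewProductMap α g p) = p := by
  simp [skewProductMap, ← mul_assoc, hα.apply_inv_mul_apply_smul]

end StrictCocycle

theorem exists_ae_eq_const_of_ae_comp_eq {G Y K : Type*} [Group G] [MeasurableSpace Y]
    {ν : Measure Y} {T : G → Y → Y} (hT : ∀ g y, T g⁻¹ (T g y) = y)
    (herg : ∀ B : Set Y, MeasurableSet B → (∀ g, ν ((T g '' B) ∆ B) = 0) → ν B = 0 ∨ ν Bᶜ = 0)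
    [MeasurableSpace K] [MeasurableSpace.CountablySeparated K] [Nonempty K] {f : Y → K}
    (hf : Measurable f) (hfT : ∀ g, f ∘ T g =ᵐ[ν] f) : ∃ c, f =ᵐ[ν] Function.const Y c := by
  refine exists_eventuallyEq_const_of_forall_separating MeasurableSet fun U hU => ?_
  refine (herg _ (hf hU) fun g => ?_).symm.imp mem_ae_iff.2 compl_mem_ae_iff.2
  rw [Set.image_eq_preimage_of_inverse (hT g) fun y => by simpa using hT g⁻¹ y,
    measure_symmDiff_eq_zero_iff]
  exact ((hfT g⁻¹).mono fun y hy => show f (T g⁻¹ y) ∈ U ↔ f y ∈ U by rw [← hy]; rfl).set_eq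

theorem continuous_uncurry_of_continuous_orbit {H 𝕜 E : Type*} [TopologicalSpace H]
    [Semiring 𝕜] [SeminormedAddCommGroup E] [Module 𝕜 E] (π : H → E ≃ₗᵢ[𝕜] E)
    (hπ : ∀ v, Continuous fun h => π h v) : Continuous fun q : H × E => π q.1 q.2 :=
  continuous_prod_of_continuous_lipschitzWith' _ 1 (fun h => (π h).lipschitz) hπ

section UnitaryRepresentation

variable {H K : Type*} [Group H] [NormedAddCommGroup K] [InnerProductSpace ℂ K]

def HasAlmostInvariantVectors [TopologicalSpace H] (π : H →* (K ≃ₗᵢ[ℂ] K)) : Prop :=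
  ∀ Q : Set H, IsCompact Q → ∀ ε : ℝ, 0 < ε → ∃ ξ : K, ‖ξ‖ = 1 ∧ ∀ h ∈ Q, ‖π h ξ - ξ‖ < ε

theorem HasAlmostInvariantVectors.almostHasInvariantUnitSections [TopologicalSpace H]
    [SigmaCompactSpace H] [MeasurableSpace K] [BorelSpace K] {G X : Type*} [Group G]
    [MulAction G X] [MeasurableSpace X]
    {π : H →* (K ≃ₗᵢ[ℂ] K)} (hπ : HasAlmostInvariantVectors π) (μ : Measure X)
    (α : X → G → H) : AlmostHasInvariantUnitSections μ fun x g => π (α x g) := by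
  choose v hv1 hv2 using fun n : ℕ =>
    hπ (compactCovering H n) (isCompact_compactCovering H n) (1 / (n + 1)) Nat.one_div_pos_of_nat
  refine ⟨fun n _ => v n, fun n => ⟨measurable_const, ae_of_all _ fun _ => hv1 n⟩,
    fun g => ae_of_all _ fun x => ?_⟩
  obtain ⟨N, hN⟩ := exists_mem_compactCovering (α x g)
  refine squeeze_zero' (Eventually.of_forall fun n => norm_nonneg _) ?_
    tendsto_one_div_add_atTop_nhds_zero_nat
  exact eventually_atTop.2 ⟨N, fun n hn => (hv2 n (α x g) (compactCovering_subset H hn hN)).le⟩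

theorem forall_apply_eq_of_ae_apply_eq [MeasurableSpace H] [MeasurableMul H] {lam : Measure H}
    [lam.IsMulLeftInvariant] [NeZero lam] (π : H →* (K ≃ₗᵢ[ℂ] K)) {v w : K}
    (hvw : ∀ᵐ h ∂lam, π h v = w) (h₀ : H) : π h₀ w = w := by
  have htrans : ∀ᵐ h ∂lam, π (h₀ * h) v = w := by
    rw [ae_iff] at hvw ⊢
    exact (measure_preimage_mul lam h₀ {h | ¬π h v = w}).trans hvw
  obtain ⟨h, hh, hh₀⟩ := (hvw.and htrans).exists
  calc π h₀ w = π (h₀ * h) v := by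
        rw [← hh, map_mul, LinearIsometryEquiv.coe_mul, Function.comp_apply]
    _ = w := hh₀

end UnitaryRepresentation

theorem QuasiInvariantAction.quasiMeasurePreserving_smul {G X : Type*} [Group G] [MulAction G X]
    [MeasurableSpace X] {μ : Measure X} (h : QuasiInvariantAction G μ) (g : G) :
    Measure.QuasiMeasurePreserving (fun x => g • x) μ μ :=
  ⟨h.1 g, (h.2 g).1⟩

section SkewProduct

variable {G S H K : Type*} [Group G] [MulAction G S] [MeasurableSpace S] [Group H]
  [MeasurableSpace H] [NormedAddCommGroup K] [InnerProductSpace ℂ K]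
  {α : S → G → H}

theorem IsStrictCocycle.isGroupoidRep [TopologicalSpace H] [OpensMeasurableSpace H]
    [MeasurableSpace K] [BorelSpace K] (hα : IsStrictCocycle α)
    (hαm : ∀ g, Measurable fun s => α s g)
    (π : H →* (K ≃ₗᵢ[ℂ] K)) (hπ : ∀ v, Continuous fun h => π h v) (μ : Measure S) :
    IsGroupoidRep μ fun s g => π (α s g) :=
  ⟨fun g v => (hπ v).measurable.comp (hαm g),
    fun g₁ g₂ => ae_of_all _ fun s v => by simp [hα s g₁ g₂]⟩

theorem ae_comp_skewProductMap_eq {μ : Measure S} (hμ : QuasiInvariantAction G μ)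
    (lam : Measure H) [SFinite lam] (π : H →* (K ≃ₗᵢ[ℂ] K)) {ξ : S → K}
    (hξ : ∀ g, ∀ᵐ s ∂μ, π (α s g) (ξ (g⁻¹ • s)) = ξ s) (g : G) :
    (fun p : S × H => π p.2⁻¹ (ξ p.1)) ∘ skewProductMap α g =ᵐ[μ.prod lam]
      fun p => π p.2⁻¹ (ξ p.1) := by
  have hξg : ∀ᵐ s ∂μ, π (α (g • s) g) (ξ s) = ξ (g • s) := by
    simpa using (hμ.quasiMeasurePreserving_smul g).ae (hξ g)
  filter_upwards [Measure.quasiMeasurePreserving_fst.ae hξg] with p hp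
  simp [skewProductMap, ← hp, LinearIsometryEquiv.mul_def]

theorem exists_invariant_of_ae_eq_const [MeasurableMul H] (μ : Measure S) [NeZero μ]
    (lam : Measure H) [SFinite lam] [lam.IsMulLeftInvariant] [NeZero lam]
    (π : H →* (K ≃ₗᵢ[ℂ] K)) {ξ : S → K} (hξ : ∀ᵐ s ∂μ, ‖ξ s‖ = 1) {v₀ : K}
    (hv₀ : (fun p : S × H => π p.2⁻¹ (ξ p.1)) =ᵐ[μ.prod lam] Function.const _ v₀) :
    ∃ v : K, v ≠ 0 ∧ ∀ h, π h v = v := by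
  obtain ⟨s, hs, hξs⟩ := ((Measure.ae_ae_of_ae_prod hv₀).and hξ).exists
  refine ⟨ξ s, norm_ne_zero_iff.1 (by rw [hξs]; exact one_ne_zero),
    forall_apply_eq_of_ae_apply_eq (v := v₀) π (hs.mono fun h hh => ?_)⟩
  simp [← show π h⁻¹ (ξ s) = v₀ from hh]

end SkewProduct

theorem skewProduct_ergodic_implies_group_propertyT_general
    {G S : Type*} [Group G]
    [MeasurableSpace S] [MulAction G S]
    (μ : Measure S) [IsProbabilityMeasure μ]
    (hqi : QuasiInvariantAction G μ)
    (hT : ActionHasPropertyT G μ)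
    {H : Type*} [Group H] [TopologicalSpace H] [IsTopologicalGroup H]
    [LocallyCompactSpace H] [SecondCountableTopology H]
    [MeasurableSpace H] [BorelSpace H]
    (lam : Measure H) [lam.IsHaarMeasure]
    (α : S → G → H)
    (hαmeas : ∀ g : G, Measurable fun s : S => α s g)
    (hαcoc : ∀ (s : S) (g₁ g₂ : G), α s (g₁ * g₂) = α s g₁ * α (g₁⁻¹ • s) g₂)
    (hskewerg : ∀ B : Set (S × H), MeasurableSet B →
      (∀ g : G,
        (μ.prod lam) (((fun p : S × H => (g • p.1, α (g • p.1) g * p.2)) '' B) ∆ B) = 0) →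
      (μ.prod lam) B = 0 ∨ (μ.prod lam) Bᶜ = 0) :
    LCGroupHasPropertyT H := by
  intro K _ _ _ _ π hπ halmost
  borelize K
  obtain ⟨ξ, ⟨hξm, hξ⟩, hξinv⟩ := hT K _ (IsStrictCocycle.isGroupoidRep hαcoc hαmeas π hπ μ)
    (HasAlmostInvariantVectors.almostHasInvariantUnitSections halmost μ α)
  have hΦ : Measurable fun p : S × H => π p.2⁻¹ (ξ p.1) :=
    (continuous_uncurry_of_continuous_orbit π hπ).measurable.comp
      (measurable_snd.inv.prodMk (hξm.comp measurable_fst))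
  obtain ⟨v₀, hv₀⟩ := exists_ae_eq_const_of_ae_comp_eq (skewProductMap_inv_apply hαcoc)
    hskewerg hΦ (ae_comp_skewProductMap_eq hqi lam π hξinv)
  exact exists_invariant_of_ae_eq_const μ lam π hξ hv₀

/-- Let `G` be a countable discrete group with an ergodic quasi-invariant property (T) action
on a standard Borel probability space `(S, μ)`, `H` a locally compact second countable group
with left Haar measure `lam`, and `α : S × G → H` a strict measurable cocycle. If the
skew-product action `g • (s, h) = (g • s, α (g • s, g) h)` of `G` on `(S × H, μ ⊗ lam)`
is ergodic, then `H` has property (T). -/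
theorem skewProduct_ergodic_implies_group_propertyT
    {G S : Type*} [Group G] [Countable G]
    [MeasurableSpace S] [StandardBorelSpace S] [MulAction G S]
    (μ : Measure S) [IsProbabilityMeasure μ]
    (hqi : QuasiInvariantAction G μ) (herg : IsErgodicSMulAction G μ)
    (hT : ActionHasPropertyT G μ)
    {H : Type*} [Group H] [TopologicalSpace H] [IsTopologicalGroup H]
    [LocallyCompactSpace H] [SecondCountableTopology H]
    [MeasurableSpace H] [BorelSpace H]
    (lam : Measure H) [lam.IsHaarMeasure]
    (α : S → G → H)
    (hαmeas : ∀ g : G, Measurable fun s : S => α s g)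
    (hαcoc : ∀ (s : S) (g₁ g₂ : G), α s (g₁ * g₂) = α s g₁ * α (g₁⁻¹ • s) g₂)
    (hskewerg : ∀ B : Set (S × H), MeasurableSet B →
      (∀ g : G,
        (μ.prod lam) (((fun p : S × H => (g • p.1, α (g • p.1) g * p.2)) '' B) ∆ B) = 0) →
      (μ.prod lam) B = 0 ∨ (μ.prod lam) Bᶜ = 0) :
    LCGroupHasPropertyT H :=
  skewProduct_ergodic_implies_group_propertyT_general μ hqi hT lam α hαmeas hαcoc hskewerg
end

section
/- Let p : Y → X be a measurable G-equivariant map between standard Borel G-spaces, with ν a quasi-invariant probability measure on Y and μ a quasi-invariant probability measure on X, and suppose ((Y,ν),(X,μ),p) is a measure preserving pair, i.e. there is a measurable family (ρ^x)_{x∈X} of probability measures on Y with ρ^x concentrated on p⁻¹(x) for μ-a.e. x, ν = ∫ ρ^x dμ(x), and for every g ∈ G: g_*ρ^x = ρ^{g•x} for μ-a.e. x. Assume both actions are ergodic. Let L be a representation of X⋊G on a separable complex Hilbert space K and let b be an L-cocycle. If the pull-back of b to Y⋊G is a coboundary — that is, there exists a measurable ξ : Y → K such that for every g ∈ G: ξ(y)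 = L(p(y), g) ξ(g⁻¹•y) + b(p(y), g) for ν-a.e. y — then b is an L-coboundary. -/
open MeasureTheory Filter Topology
open scoped Pointwise symmDiff InnerProductSpace ENNReal

/-!
The pulled-back coboundary satisfies `ξ (g • y) = L (g • p y) g (ξ y) + b (g • p y) g`, an affine
isometry of `K` applied to `ξ y`, so `G` preserves the distances `‖ξ y' - ξ y‖` within fibres.
Hence `y ↦ ρ^{p y} {y' | ‖ξ y' - ξ y‖ ≤ r}` is `G`-invariant, and by ergodicity of `Y` it exceeds
`1/2` almost everywhere for some `r`. Two balls of fibre measure `> 1/2` meet, so `ξ` is bounded on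
almost every fibre and the fibre average `η x = ∫ ξ dρ^x` exists; the equivariance of `ρ` turns the
relation for `ξ` into `η x = L x g (η (g⁻¹ • x)) + b x g`.
-/

open ProbabilityTheory Set Metric

section Disintegration

variable {X Y : Type*} [MeasurableSpace X] [MeasurableSpace Y] {μ : Measure X} {p : Y → X}
  {ρ : X → Measure Y}

theorem quasiMeasurePreserving_bind_of_ae_fiber (hp : Measurable p) (hρ : Measurable ρ)
    (hfib : ∀ᵐ x ∂μ, ρ x {y | p y ≠ x} = 0) :
    Measure.QuasiMeasurePreserving p (μ.bind ρ) μ := by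
  refine ⟨hp, Measure.AbsolutelyContinuous.mk fun t ht hμt => ?_⟩
  rw [Measure.map_apply hp ht, Measure.bind_apply (hp ht) hρ.aemeasurable]
  refine (lintegral_congr_ae ?_).trans lintegral_zero
  filter_upwards [hfib, measure_eq_zero_iff_ae_notMem.mp hμt] with x hx hxt
  exact measure_mono_null (fun y (hy : p y ∈ t) (hpy : p y = x) => hxt (hpy ▸ hy)) hx

theorem ae_ae_of_ae_bind_of_ae_fiber (hρ : Measurable ρ)
    (hfib : ∀ᵐ x ∂μ, ρ x {y | p y ≠ x} = 0) {Q : X → Y → Prop}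
    (h : ∀ᵐ y ∂μ.bind ρ, Q (p y) y) : ∀ᵐ x ∂μ, ∀ᵐ y ∂ρ x, Q x y := by
  filter_upwards [Measure.ae_ae_of_ae_bind hρ.aemeasurable h, hfib] with x hx hxfib
  filter_upwards [hx, ae_iff.mpr hxfib] with y hy hpy
  rwa [← hpy]

theorem exists_isFiniteKernel_ae_eq (hρ : Measurable ρ)
    (hprob : ∀ᵐ x ∂μ, IsProbabilityMeasure (ρ x)) :
    ∃ κ : Kernel X Y, IsFiniteKernel κ ∧ ∀ᵐ x ∂μ, κ x = ρ x := by
  classical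
  have hs : MeasurableSet {x | ρ x univ = 1} :=
    (Measure.measurable_coe MeasurableSet.univ).comp hρ (measurableSet_singleton 1)
  refine ⟨⟨fun x => if ρ x univ = 1 then ρ x else 0, hρ.ite hs measurable_const⟩,
    ⟨⟨1, ENNReal.one_lt_top, fun x => ?_⟩⟩, ?_⟩
  · dsimp only [Kernel.coe_mk]
    split_ifs with hx
    exacts [hx.le, zero_le]
  · filter_upwards [hprob] with x hx
    simp [hx.measure_univ]

end Disintegration

section ProbabilityMeasure

variable {Y E : Type*} [MeasurableSpace Y] {m : Measure Y}

theorem exists_nat_lt_measure_preimage_closedBall [IsProbabilityMeasure m] [PseudoMetricSpace E]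
    (f : Y → E) (c : E) {r : ℝ≥0∞} (hr : r < 1) : ∃ n : ℕ, r < m (f ⁻¹' closedBall c n) := by
  have hmono : Monotone fun n : ℕ => f ⁻¹' closedBall c n := fun k n hkn =>
    preimage_mono (closedBall_subset_closedBall (Nat.cast_le.mpr hkn))
  have hlim := tendsto_measure_iUnion_atTop (μ := m) hmono
  rw [← preimage_iUnion, iUnion_closedBall_nat, preimage_univ, measure_univ] at hlim
  exact (hlim.eventually (eventually_gt_nhds hr)).exists

theorem integrable_of_ae_half_lt_measure_preimage_closedBall [IsProbabilityMeasure m]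
    [NormedAddCommGroup E] [MeasurableSpace E] [OpensMeasurableSpace E]
    [SecondCountableTopology E] {f : Y → E} (hf : Measurable f) {r : ℝ}
    (h : ∀ᵐ y ∂m, 1 / 2 < m (f ⁻¹' closedBall (f y) r)) : Integrable f m := by
  obtain ⟨y₀, hy₀⟩ := h.exists
  refine Integrable.of_bound hf.aestronglyMeasurable (‖f y₀‖ + 2 * r) ?_
  filter_upwards [h] with y hy
  obtain ⟨z, hzy, hzy₀⟩ := nonempty_inter_of_measure_lt_add m (s := f ⁻¹' closedBall (f y) r)
    (hf measurableSet_closedBall) (subset_univ _) (subset_univ _) (by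
      rw [measure_univ]
      exact (ENNReal.add_halves 1).symm.trans_lt (ENNReal.add_lt_add hy hy₀))
  rw [mem_preimage, mem_closedBall] at hzy hzy₀
  calc ‖f y‖ ≤ ‖f y₀‖ + dist (f y) (f y₀) := by
        rw [dist_eq_norm]; exact norm_le_insert' _ _
    _ ≤ ‖f y₀‖ + (dist (f z) (f y) + dist (f z) (f y₀)) := by
        gcongr; exact dist_triangle_left _ _ _
    _ ≤ ‖f y₀‖ + 2 * r := by linarith

theorem exists_ae_of_ae_exists_of_ae_or_ae_not {ι : Type*} [Countable ι] [NeZero m]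
    {P : ι → Y → Prop} (hdich : ∀ i, (∀ᵐ y ∂m, P i y) ∨ ∀ᵐ y ∂m, ¬P i y)
    (h : ∀ᵐ y ∂m, ∃ i, P i y) : ∃ i, ∀ᵐ y ∂m, P i y := by
  by_contra hne
  have hnot : ∀ᵐ y ∂m, ∀ i, ¬P i y :=
    ae_all_iff.mpr fun i => (hdich i).resolve_left fun hi => hne ⟨i, hi⟩
  obtain ⟨y, ⟨i, hi⟩, hy⟩ := (h.and hnot).exists
  exact hy i hi

theorem measure_map_preimage_closedBall_of_ae_comp_eq [PseudoMetricSpace E] [MeasurableSpace E]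
    [OpensMeasurableSpace E] {T : Y → Y} (hT : Measurable T) {f : Y → E} (hf : Measurable f)
    {φ : E → E} (hφ : Isometry φ) (hfT : ∀ᵐ w ∂m, f (T w) = φ (f w)) (c : E) (r : ℝ) :
    m.map T (f ⁻¹' closedBall (φ c) r) = m (f ⁻¹' closedBall c r) := by
  rw [Measure.map_apply hT (hf measurableSet_closedBall)]
  refine measure_congr (hfT.mono fun w hw => propext ?_)
  show dist (f (T w)) (φ c) ≤ r ↔ dist (f w) c ≤ r
  rw [hw, hφ.dist_eq]

theorem integral_map_of_ae_comp_eq_add [IsProbabilityMeasure m] {𝕜 : Type*} [RCLike 𝕜]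
    [NormedAddCommGroup E] [NormedSpace 𝕜 E] [NormedSpace ℝ E] [CompleteSpace E]
    {T : Y → Y} (hT : Measurable T) {f : Y → E} (hf : StronglyMeasurable f)
    (hfi : Integrable f m) (U : E ≃ₗᵢ[𝕜] E) (c : E) (hfT : ∀ᵐ w ∂m, f (T w) = U (f w) + c) :
    ∫ y, f y ∂m.map T = U (∫ y, f y ∂m) + c := by
  rw [integral_map hT.aemeasurable hf.aestronglyMeasurable, integral_congr_ae hfT,
    integral_add ((U.integrable_comp_iff).mpr hfi) (integrable_const c), integral_const,
    probReal_univ, one_smul]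
  congr 1
  exact U.toLinearIsometry.integral_comp_comm f

end ProbabilityMeasure

theorem IsErgodicSMulAction.ae_mem_or_ae_notMem {G Y : Type*} [Group G] [MulAction G Y]
    [MeasurableSpace Y] {ν : Measure Y} [IsProbabilityMeasure ν] (herg : IsErgodicSMulAction G ν)
    {A : Set Y} (hA : MeasurableSet A) (hinv : ∀ g : G, ∀ᵐ y ∂ν, (g • y ∈ A ↔ y ∈ A)) :
    (∀ᵐ y ∂ν, y ∈ A) ∨ ∀ᵐ y ∂ν, y ∉ A := by
  have hsymm : ∀ g : G, ν ((g • A) ∆ A) = 0 := fun g => by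
    refine measure_mono_null (fun y hy => ?_) (ae_iff.mp (hinv g⁻¹))
    intro hiff
    rw [mem_symmDiff, mem_smul_set_iff_inv_smul_mem, hiff] at hy
    tauto
  rcases herg A hA hsymm with h0 | h1
  · exact Or.inr (measure_eq_zero_iff_ae_notMem.mp h0)
  · exact Or.inl ((ae_mem_iff_measure_eq hA.nullMeasurableSet).mpr (by rw [h1, measure_univ]))

theorem QuasiInvariantAction.quasiMeasurePreserving_s10 {G X : Type*} [Group G] [MulAction G X]
    [MeasurableSpace X] {μ : Measure X} (h : QuasiInvariantAction G μ) (g : G) :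
    Measure.QuasiMeasurePreserving (fun x : X => g • x) μ μ :=
  ⟨h.1 g, (h.2 g).1⟩

section FiberBall

variable {X Y E : Type*} [MeasurableSpace X] [MeasurableSpace Y] {μ : Measure X} {ν : Measure Y}
  {p : Y → X} {κ : Kernel X Y} {ξ : Y → E}

noncomputable def fiberBallMeasure [PseudoMetricSpace E] (κ : Kernel X Y) (p : Y → X)
    (ξ : Y → E) (r : ℝ) (y : Y) : ℝ≥0∞ :=
  κ (p y) (ξ ⁻¹' closedBall (ξ y) r)

theorem measurable_fiberBallMeasure [PseudoMetricSpace E] [MeasurableSpace E]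
    [OpensMeasurableSpace E] [SecondCountableTopology E] [IsSFiniteKernel κ] (hp : Measurable p)
    (hξ : Measurable ξ) (r : ℝ) : Measurable (fiberBallMeasure κ p ξ r) :=
  Kernel.measurable_kernel_prodMk_left (κ := κ.comap p hp)
    (measurableSet_le ((hξ.comp measurable_snd).dist (hξ.comp measurable_fst)) measurable_const)

theorem ae_integrable_of_ae_half_lt_fiberBallMeasure [NormedAddCommGroup E] [MeasurableSpace E]
    [OpensMeasurableSpace E] [SecondCountableTopology E]
    (hκprob : ∀ᵐ x ∂μ, IsProbabilityMeasure (κ x)) (hκfib : ∀ᵐ x ∂μ, κ x {y | p y ≠ x} = 0)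
    (hdisint : ν = μ.bind κ) (hξ : Measurable ξ) {r : ℝ}
    (h : ∀ᵐ y ∂ν, 1 / 2 < fiberBallMeasure κ p ξ r y) : ∀ᵐ x ∂μ, Integrable ξ (κ x) := by
  subst hdisint
  filter_upwards [ae_ae_of_ae_bind_of_ae_fiber κ.measurable hκfib
    (Q := fun x y => 1 / 2 < κ x (ξ ⁻¹' closedBall (ξ y) r)) h, hκprob] with x hx _
  exact integrable_of_ae_half_lt_measure_preimage_closedBall hξ hx

variable {G : Type*} [Group G] [MulAction G Y]

theorem exists_ae_half_lt_fiberBallMeasure [PseudoMetricSpace E] [MeasurableSpace E]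
    [OpensMeasurableSpace E] [SecondCountableTopology E] [IsProbabilityMeasure ν]
    [IsSFiniteKernel κ] (herg : IsErgodicSMulAction G ν) (hp : Measurable p)
    (hκprob : ∀ᵐ x ∂μ, IsProbabilityMeasure (κ x)) (hκfib : ∀ᵐ x ∂μ, κ x {y | p y ≠ x} = 0)
    (hdisint : ν = μ.bind κ) (hξ : Measurable ξ)
    (hinv : ∀ (r : ℝ) (g : G), ∀ᵐ y ∂ν,
      fiberBallMeasure κ p ξ r (g • y) = fiberBallMeasure κ p ξ r y) :
    ∃ n : ℕ, ∀ᵐ y ∂ν, 1 / 2 < fiberBallMeasure κ p ξ n y := by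
  refine exists_ae_of_ae_exists_of_ae_or_ae_not (fun n => ?_) ?_
  · exact herg.ae_mem_or_ae_notMem (A := {y | 1 / 2 < fiberBallMeasure κ p ξ n y})
      (measurableSet_lt measurable_const (measurable_fiberBallMeasure hp hξ n))
      fun g => (hinv n g).mono fun y hy => iff_of_eq (congrArg (1 / 2 < ·) hy)
  · subst hdisint
    filter_upwards [(quasiMeasurePreserving_bind_of_ae_fiber hp κ.measurable hκfib).ae
      hκprob] with y _
    exact exists_nat_lt_measure_preimage_closedBall ξ (ξ y)
      (ENNReal.half_lt_self one_ne_zero ENNReal.one_ne_top)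

variable [MulAction G X]

theorem fiberBallMeasure_smul_ae_eq [PseudoMetricSpace E] [MeasurableSpace E]
    [OpensMeasurableSpace E] (hp : Measurable p) (hκfib : ∀ᵐ x ∂μ, κ x {y | p y ≠ x} = 0)
    (hdisint : ν = μ.bind κ) {g : G} (hg : Measurable (g • · : Y → Y))
    (hequiv : ∀ y, p (g • y) = g • p y) (hκinv : ∀ᵐ x ∂μ, (κ x).map (g • ·) = κ (g • x))
    (hξ : Measurable ξ) {A : X → E → E} (hA : ∀ x, Isometry (A x))
    (hrel : ∀ᵐ y ∂ν, ξ (g • y) = A (g • p y) (ξ y)) (r : ℝ) :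
    ∀ᵐ y ∂ν, fiberBallMeasure κ p ξ r (g • y) = fiberBallMeasure κ p ξ r y := by
  subst hdisint
  have hfiber : ∀ᵐ x ∂μ, ∀ᵐ w ∂κ x, ξ (g • w) = A (g • x) (ξ w) :=
    ae_ae_of_ae_bind_of_ae_fiber κ.measurable hκfib hrel
  have hpq := quasiMeasurePreserving_bind_of_ae_fiber hp κ.measurable hκfib
  filter_upwards [hpq.ae hκinv, hpq.ae hfiber, hrel] with y hinv hfib hy
  rw [fiberBallMeasure, fiberBallMeasure, hequiv, ← hinv, hy,
    measure_map_preimage_closedBall_of_ae_comp_eq hg hξ (hA _) hfib]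

theorem ae_integral_smul_eq_add {𝕜 : Type*} [RCLike 𝕜] [NormedAddCommGroup E]
    [NormedSpace 𝕜 E] [NormedSpace ℝ E] [CompleteSpace E] [MeasurableSpace E] [BorelSpace E]
    [SecondCountableTopology E] {g : G} (hg : Measurable (g • · : Y → Y))
    (hκprob : ∀ᵐ x ∂μ, IsProbabilityMeasure (κ x))
    (hκinv : ∀ᵐ x ∂μ, (κ x).map (g • ·) = κ (g • x)) (hξ : Measurable ξ)
    (hint : ∀ᵐ x ∂μ, Integrable ξ (κ x)) (U : X → E ≃ₗᵢ[𝕜] E) (c : X → E)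
    (hfiber : ∀ᵐ x ∂μ, ∀ᵐ w ∂κ x, ξ (g • w) = U (g • x) (ξ w) + c (g • x)) :
    ∀ᵐ x ∂μ, ∫ y, ξ y ∂κ (g • x) = U (g • x) (∫ y, ξ y ∂κ x) + c (g • x) := by
  filter_upwards [hκprob, hκinv, hint, hfiber] with x _ hinv hintx hfibx
  rw [← hinv]
  exact integral_map_of_ae_comp_eq_add hg hξ.stronglyMeasurable hintx _ _ hfibx

end FiberBall

theorem isLCoboundary_of_pullback_of_isFiniteKernel {G X Y : Type*} [Group G]
    [MeasurableSpace X] [MulAction G X] [MeasurableSpace Y] [MulAction G Y]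
    {μ : Measure X} {ν : Measure Y} [IsProbabilityMeasure ν]
    (hqiX : QuasiInvariantAction G μ) (hqiY : QuasiInvariantAction G ν)
    (hergY : IsErgodicSMulAction G ν) {p : Y → X} (hp : Measurable p)
    (hequiv : ∀ (g : G) (y : Y), p (g • y) = g • p y) {κ : Kernel X Y} [IsFiniteKernel κ]
    (hκprob : ∀ᵐ x ∂μ, IsProbabilityMeasure (κ x)) (hκfib : ∀ᵐ x ∂μ, κ x {y | p y ≠ x} = 0)
    (hdisint : ν = μ.bind κ) (hκinv : ∀ g : G, ∀ᵐ x ∂μ, (κ x).map (g • ·) = κ (g • x))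
    {K : Type*} [NormedAddCommGroup K] [InnerProductSpace ℂ K]
    [CompleteSpace K] [SecondCountableTopology K] [MeasurableSpace K] [BorelSpace K]
    (L : X → G → (K ≃ₗᵢ[ℂ] K)) (b : X → G → K)
    (hpullback : ∃ ξ : Y → K, Measurable ξ ∧
      ∀ g : G, ∀ᵐ y ∂ν, ξ y = L (p y) g (ξ (g⁻¹ • y)) + b (p y) g) :
    IsLCoboundary μ L b := by
  obtain ⟨ξ, hξ, hrel⟩ := hpullback
  have hsmul : ∀ g : G, ∀ᵐ y ∂ν, ξ (g • y) = L (g • p y) g (ξ y) + b (g • p y) g := fun g => by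
    filter_upwards [(hqiY.quasiMeasurePreserving_s10 g).ae (hrel g)] with y hy
    rwa [hequiv, inv_smul_smul] at hy
  have hinv (r : ℝ) (g : G) :
      ∀ᵐ y ∂ν, fiberBallMeasure κ p ξ r (g • y) = fiberBallMeasure κ p ξ r y :=
    fiberBallMeasure_smul_ae_eq hp hκfib hdisint (hqiY.1 g) (hequiv g) (hκinv g) hξ
      (fun x => (IsometryEquiv.addRight (b x g)).isometry.comp (L x g).isometry) (hsmul g) r
  obtain ⟨n, hn⟩ := exists_ae_half_lt_fiberBallMeasure hergY hp hκprob hκfib hdisint hξ hinv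
  have hint := ae_integrable_of_ae_half_lt_fiberBallMeasure hκprob hκfib hdisint hξ hn
  refine ⟨fun x => ∫ y, ξ y ∂κ x,
    (hξ.comp measurable_snd).stronglyMeasurable.integral_kernel_prod_right'.measurable,
    fun g => ?_⟩
  have hfiber : ∀ᵐ x ∂μ, ∀ᵐ w ∂κ x, ξ (g • w) = L (g • x) g (ξ w) + b (g • x) g := by
    subst hdisint
    exact ae_ae_of_ae_bind_of_ae_fiber κ.measurable hκfib (hsmul g)
  have hη := ae_integral_smul_eq_add (hqiY.1 g) hκprob (hκinv g) hξ hint (fun x => L x g)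
    (fun x => b x g) hfiber
  filter_upwards [(hqiX.quasiMeasurePreserving_s10 g⁻¹).ae hη] with x hx
  rw [smul_inv_smul] at hx
  rw [hx, add_sub_cancel_left]

theorem pullback_coboundary_implies_coboundary_general
    {G X Y : Type*} [Group G]
    [MeasurableSpace X] [MulAction G X]
    [MeasurableSpace Y] [MulAction G Y]
    (μ : Measure X) (ν : Measure Y) [IsProbabilityMeasure ν]
    (hqiX : QuasiInvariantAction G μ) (hqiY : QuasiInvariantAction G ν)
    (hergY : IsErgodicSMulAction G ν)
    (p : Y → X) (hp : Measurable p)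
    (hequiv : ∀ (g : G) (y : Y), p (g • y) = g • p y)
    (ρ : X → Measure Y) (hρmeas : Measurable ρ)
    (hρprob : ∀ᵐ x ∂μ, IsProbabilityMeasure (ρ x))
    (hρfib : ∀ᵐ x ∂μ, ρ x {y | p y ≠ x} = 0)
    (hdisint : ν = μ.bind ρ)
    (hρinv : ∀ g : G, ∀ᵐ x ∂μ, (ρ x).map (fun y => g • y) = ρ (g • x))
    {K : Type*} [NormedAddCommGroup K] [InnerProductSpace ℂ K]
    [CompleteSpace K] [SecondCountableTopology K] [MeasurableSpace K] [BorelSpace K]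
    (L : X → G → (K ≃ₗᵢ[ℂ] K))
    (b : X → G → K)
    (hpullback : ∃ ξ : Y → K, Measurable ξ ∧
      ∀ g : G, ∀ᵐ y ∂ν, ξ y = L (p y) g (ξ (g⁻¹ • y)) + b (p y) g) :
    IsLCoboundary μ L b := by
  -- measurability of the fibre averages needs an honest finite kernel, not just a.e. probabilities
  obtain ⟨κ, _, hκρ⟩ := exists_isFiniteKernel_ae_eq hρmeas hρprob
  refine isLCoboundary_of_pullback_of_isFiniteKernel hqiX hqiY hergY hp hequiv (κ := κ)
    ?_ ?_ (hdisint.trans (Measure.bind_congr_right hκρ).symm) (fun g => ?_) L b hpullback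
  · filter_upwards [hκρ, hρprob] with x hκx hρx
    rwa [hκx]
  · filter_upwards [hκρ, hρfib] with x hκx hρx
    rwa [hκx]
  · filter_upwards [hκρ, (hqiX.quasiMeasurePreserving_s10 g).ae hκρ, hρinv g] with x hκx hκgx hρx
    rw [hκx, hκgx, hρx]

/-- For a measure preserving ergodic pair `((Y,ν),(X,μ),p)` of standard Borel `G`-spaces of a
countable discrete group `G`, a representation `L` of `X ⋊ G` on a separable complex Hilbert
space and an `L`-cocycle `b`: if the pull-back of `b` to `Y ⋊ G` is a coboundary, then `b`
itself is an `L`-coboundary. -/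
theorem pullback_coboundary_implies_coboundary
    {G X Y : Type*} [Group G] [Countable G]
    [MeasurableSpace X] [StandardBorelSpace X] [MulAction G X]
    [MeasurableSpace Y] [StandardBorelSpace Y] [MulAction G Y]
    (μ : Measure X) [IsProbabilityMeasure μ] (ν : Measure Y) [IsProbabilityMeasure ν]
    (hqiX : QuasiInvariantAction G μ) (hqiY : QuasiInvariantAction G ν)
    (hergX : IsErgodicSMulAction G μ) (hergY : IsErgodicSMulAction G ν)
    (p : Y → X) (hp : Measurable p)
    (hequiv : ∀ (g : G) (y : Y), p (g • y) = g • p y)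
    (ρ : X → Measure Y) (hρmeas : Measurable ρ)
    (hρprob : ∀ᵐ x ∂μ, IsProbabilityMeasure (ρ x))
    (hρfib : ∀ᵐ x ∂μ, ρ x {y | p y ≠ x} = 0)
    (hdisint : ν = μ.bind ρ)
    (hρinv : ∀ g : G, ∀ᵐ x ∂μ, (ρ x).map (fun y => g • y) = ρ (g • x))
    {K : Type*} [NormedAddCommGroup K] [InnerProductSpace ℂ K]
    [CompleteSpace K] [SecondCountableTopology K] [MeasurableSpace K] [BorelSpace K]
    (L : X → G → (K ≃ₗᵢ[ℂ] K)) (hL : IsGroupoidRep μ L)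
    (b : X → G → K) (hb : IsLCocycle μ L b)
    (hpullback : ∃ ξ : Y → K, Measurable ξ ∧
      ∀ g : G, ∀ᵐ y ∂ν, ξ y = L (p y) g (ξ (g⁻¹ • y)) + b (p y) g) :
    IsLCoboundary μ L b :=
  pullback_coboundary_implies_coboundary_general μ ν hqiX hqiY hergY p hp hequiv ρ hρmeas hρprob
    hρfib hdisint hρinv L b hpullback
end

section
/- Let L be a representation of X⋊G on a separable complex Hilbert space K, let ν be a probability measure on X × G equivalent to μ ⊗ (counting measure on G), and for a unit section ξ write c_L(ξ)(x,g) = ξ(x) − L(x,g) ξ(g⁻¹•x). Then the following are equivalent: (1) for every ε > 0 there exists a unit section ξ with ν({ (x,g) : ‖c_L(ξ)(x,g)‖ ≥ ε }) ≤ ε; (2) there exists a sequence of unit sections (ξ_n) such that for every g ∈ G, ‖c_L(ξ_n)(x,g)‖ → 0 for μ-a.e. x; (3) there exists a sequence of unit sections (ξ_n) such that for every F ∈ L¹(X × G, μ ⊗ counting measure), ∫ F(x,g) ‖c_L(ξ_n)(x,g)‖ d(μ ⊗ counting)(x,g) → 0 as n → ∞. -/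
open MeasureTheory Filter Topology
open scoped Pointwise symmDiff InnerProductSpace ENNReal

section Aux

lemma aux_count_sigmaFinite {α : Type*} [MeasurableSpace α] [Countable α]
    [MeasurableSingletonClass α] : SigmaFinite (Measure.count : Measure α) := by
  refine Measure.sigmaFinite_of_countable
    (Set.countable_range fun a : α => ({a} : Set α)) ?_ ?_
  · rintro s ⟨a, rfl⟩
    simp [Measure.count_singleton]
  · apply Set.eq_univ_of_forall
    intro a
    exact ⟨{a}, ⟨a, rfl⟩, rfl⟩

variable {G X : Type*} [Countable G]
    [MeasurableSpace G] [MeasurableSingletonClass G]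
    [MeasurableSpace X] {μ : Measure X}

lemma aux_ae_prod_count_of_forall {P : X → G → Prop} (h : ∀ g : G, ∀ᵐ x ∂μ, P x g) :
    ∀ᵐ p ∂(μ.prod Measure.count), P p.1 p.2 := by
  haveI := aux_count_sigmaFinite (α := G)
  have hN : ∀ g : G, μ (toMeasurable μ {x | ¬ P x g}) = 0 := by
    intro g
    rw [measure_toMeasurable]
    exact (h g)
  rw [ae_iff]
  refine measure_mono_null (fun p hp => ?_)
    (measure_iUnion_null (s := fun g : G => toMeasurable μ {x | ¬ P x g} ×ˢ ({g} : Set G)) ?_)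
  · exact Set.mem_iUnion.mpr ⟨p.2, ⟨subset_toMeasurable μ _ hp, rfl⟩⟩
  · intro g
    rw [Measure.prod_prod, hN g, zero_mul]

lemma aux_ae_of_ae_prod_count {P : X → G → Prop}
    (h : ∀ᵐ p ∂(μ.prod Measure.count), P p.1 p.2) :
    ∀ᵐ x ∂μ, ∀ g : G, P x g := by
  haveI := aux_count_sigmaFinite (α := G)
  have h0 : μ.prod Measure.count {p : X × G | ¬ P p.1 p.2} = 0 := by
    simpa [ae_iff] using h
  have h1 := Measure.measure_ae_null_of_prod_null h0
  filter_upwards [h1] with x hx g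
  by_contra hPg
  have hmem : g ∈ Prod.mk x ⁻¹' {p : X × G | ¬ P p.1 p.2} := hPg
  have : (Prod.mk x ⁻¹' {p : X × G | ¬ P p.1 p.2} : Set G) = ∅ :=
    Measure.count_eq_zero_iff.mp hx
  rw [this] at hmem
  exact hmem

end Aux

/-- Let `L` be a representation of `X ⋊ G` on a separable complex Hilbert space, and `ν` a
probability measure on `X × G` equivalent to `μ ⊗ (counting measure)`. Writing
`c_L(ξ)(x,g) = ξ x - L(x,g) ξ(g⁻¹ • x)`, the following are equivalent: (1) for every `ε > 0`
there is a unit section `ξ` with `ν(‖c_L(ξ)‖ ≥ ε) ≤ ε`; (2) there is a sequence of unit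
sections `ξ n` with `c_L(ξ n) → 0` almost everywhere; (3) there is a sequence of unit
sections `ξ n` with `∫ F ‖c_L(ξ n)‖ → 0` for every `F ∈ L¹(μ ⊗ counting measure)`. -/
theorem almost_invariant_sections_tfae
    {G X : Type*} [Group G] [Countable G]
    [MeasurableSpace G] [MeasurableSingletonClass G]
    [MeasurableSpace X] [StandardBorelSpace X] [MulAction G X]
    (μ : Measure X) [IsProbabilityMeasure μ] (hqi : QuasiInvariantAction G μ)
    {K : Type*} [NormedAddCommGroup K] [InnerProductSpace ℂ K]
    [CompleteSpace K] [SecondCountableTopology K] [MeasurableSpace K] [BorelSpace K]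
    (L : X → G → (K ≃ₗᵢ[ℂ] K)) (hL : IsGroupoidRep μ L)
    (ν : Measure (X × G)) [IsProbabilityMeasure ν]
    (hν : ν ≪ μ.prod Measure.count ∧ μ.prod Measure.count ≪ ν) :
    List.TFAE
      [∀ ε : ℝ, 0 < ε → ∃ ξ : X → K, IsUnitSection μ ξ ∧
         ν {p : X × G | ε ≤ ‖ξ p.1 - L p.1 p.2 (ξ (p.2⁻¹ • p.1))‖} ≤ ENNReal.ofReal ε,
       ∃ ξ : ℕ → X → K, (∀ n, IsUnitSection μ (ξ n)) ∧
         ∀ g : G, ∀ᵐ x ∂μ,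
           Tendsto (fun n => ‖ξ n x - L x g (ξ n (g⁻¹ • x))‖) atTop (𝓝 0),
       ∃ ξ : ℕ → X → K, (∀ n, IsUnitSection μ (ξ n)) ∧
         ∀ F : X × G → ℝ, Integrable F (μ.prod Measure.count) →
           Tendsto
             (fun n => ∫ p, F p * ‖ξ n p.1 - L p.1 p.2 (ξ n (p.2⁻¹ • p.1))‖
               ∂(μ.prod Measure.count))
             atTop (𝓝 0)] := by
  haveI : SigmaFinite (Measure.count : Measure G) := aux_count_sigmaFinite
  obtain ⟨hsmul, hqiv⟩ := hqi
  -- measurability of the cocycle norm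
  have hmeasC : ∀ {ξ : X → K}, Measurable ξ →
      Measurable (fun p : X × G => ‖ξ p.1 - L p.1 p.2 (ξ (p.2⁻¹ • p.1))‖) := by
    intro ξ hξ
    have : Measurable (fun p : X × G => ξ p.1 - L p.1 p.2 (ξ (p.2⁻¹ • p.1))) := by
      apply measurable_from_prod_countable_left
      intro g
      have h1 : Measurable (Function.uncurry fun (v : K) (x : X) => L x g v) :=
        measurable_uncurry_of_continuous_of_measurable
          (fun x => (L x g).continuous) (hL.1 g)
      have h2 : Measurable fun x : X => L x g (ξ (g⁻¹ • x)) :=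
        h1.comp ((hξ.comp (hsmul g⁻¹)).prodMk measurable_id)
      exact hξ.sub h2
    exact this.norm
  -- a.e. bound by 2 for unit sections
  have hbound : ∀ {ξ : X → K}, IsUnitSection μ ξ →
      ∀ᵐ p ∂(μ.prod Measure.count), ‖ξ p.1 - L p.1 p.2 (ξ (p.2⁻¹ • p.1))‖ ≤ 2 := by
    intro ξ hξ
    refine aux_ae_prod_count_of_forall
      (P := fun x g => ‖ξ x - L x g (ξ (g⁻¹ • x))‖ ≤ 2) ?_
    intro g
    have h2 : ∀ᵐ x ∂μ, ‖ξ (g⁻¹ • x)‖ = 1 := by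
      have hNm : MeasurableSet {x : X | ¬ ‖ξ x‖ = 1} :=
        ((hξ.1.norm) (measurableSet_singleton (1 : ℝ))).compl
      have hN0 : μ {x : X | ¬ ‖ξ x‖ = 1} = 0 := hξ.2
      rw [ae_iff]
      have : {x : X | ¬ ‖ξ (g⁻¹ • x)‖ = 1} = (fun x : X => g⁻¹ • x) ⁻¹' {x | ¬ ‖ξ x‖ = 1} :=
        rfl
      rw [this, ← Measure.map_apply (hsmul g⁻¹) hNm]
      exact (hqiv g⁻¹).1 hN0
    filter_upwards [hξ.2, h2] with x hx1 hx2
    calc ‖ξ x - L x g (ξ (g⁻¹ • x))‖ ≤ ‖ξ x‖ + ‖L x g (ξ (g⁻¹ • x))‖ := norm_sub_le _ _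
      _ = 1 + 1 := by rw [hx1, (L x g).norm_map, hx2]
      _ = 2 := by norm_num
  tfae_have 1 → 2 := by
    intro h1
    choose ξ hξu hξν using fun n : ℕ => h1 ((1/2 : ℝ)^n) (by positivity)
    refine ⟨ξ, hξu, ?_⟩
    set c : ℕ → X × G → ℝ := fun n p => ‖ξ n p.1 - L p.1 p.2 (ξ n (p.2⁻¹ • p.1))‖ with hc
    have hsum : ∑' n : ℕ, ν {p : X × G | (1/2 : ℝ)^n ≤ c n p} ≠ ∞ := by
      refine ne_top_of_le_ne_top ?_ (ENNReal.tsum_le_tsum fun n => hξν n)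
      rw [← ENNReal.ofReal_tsum_of_nonneg (fun n => by positivity) summable_geometric_two]
      exact ENNReal.ofReal_ne_top
    have hae : ∀ᵐ p ∂ν, ∀ᶠ n in atTop, p ∉ {p : X × G | (1/2 : ℝ)^n ≤ c n p} :=
      ae_eventually_notMem hsum
    have haem : ∀ᵐ p ∂(μ.prod Measure.count), Tendsto (fun n => c n p) atTop (𝓝 0) := by
      filter_upwards [hae.filter_mono hν.2.ae_le] with p hp
      refine squeeze_zero' (Filter.Eventually.of_forall fun n => norm_nonneg _)
        (hp.mono fun n hn => (not_le.mp hn).le) ?_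
      exact tendsto_pow_atTop_nhds_zero_of_lt_one (by norm_num) (by norm_num)
    have := aux_ae_of_ae_prod_count
      (P := fun x g => Tendsto (fun n => ‖ξ n x - L x g (ξ n (g⁻¹ • x))‖) atTop (𝓝 0)) haem
    intro g
    filter_upwards [this] with x hx using hx g
  tfae_have 2 → 3 := by
    rintro ⟨ξ, hξu, hconv⟩
    refine ⟨ξ, hξu, ?_⟩
    intro F hF
    have haeconv : ∀ᵐ p ∂(μ.prod Measure.count),
        Tendsto (fun n => ‖ξ n p.1 - L p.1 p.2 (ξ n (p.2⁻¹ • p.1))‖) atTop (𝓝 0) :=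
      aux_ae_prod_count_of_forall hconv
    have hboundall : ∀ᵐ p ∂(μ.prod Measure.count),
        ∀ n, ‖ξ n p.1 - L p.1 p.2 (ξ n (p.2⁻¹ • p.1))‖ ≤ 2 :=
      ae_all_iff.mpr fun n => hbound (hξu n)
    have h0 : (0 : ℝ) = ∫ _ : X × G, (0 : ℝ) ∂(μ.prod Measure.count) := by simp
    rw [h0]
    refine tendsto_integral_of_dominated_convergence (fun p => |F p| * 2)
      (fun n => hF.1.mul (hmeasC (hξu n).1).aestronglyMeasurable)
      (hF.abs.mul_const 2) ?_ ?_
    · intro n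
      filter_upwards [hboundall] with p hp
      have hnn : (0 : ℝ) ≤ ‖ξ n p.1 - L p.1 p.2 (ξ n (p.2⁻¹ • p.1))‖ := norm_nonneg _
      calc ‖F p * ‖ξ n p.1 - L p.1 p.2 (ξ n (p.2⁻¹ • p.1))‖‖
          = |F p| * ‖ξ n p.1 - L p.1 p.2 (ξ n (p.2⁻¹ • p.1))‖ := by
            rw [Real.norm_eq_abs, abs_mul, abs_of_nonneg hnn]
        _ ≤ |F p| * 2 := by
            exact mul_le_mul_of_nonneg_left (hp n) (abs_nonneg _)
    · filter_upwards [haeconv] with p hp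
      simpa using hp.const_mul (F p)
  tfae_have 3 → 1 := by
    rintro ⟨ξ, hξu, hint⟩ ε hε
    set m : Measure (X × G) := μ.prod Measure.count with hm
    set F : X × G → ℝ := fun p => (ν.rnDeriv m p).toReal with hF
    have hFint : Integrable F m := Measure.integrable_toReal_rnDeriv
    have key : ∀ n : ℕ, ∫ p, F p * ‖ξ n p.1 - L p.1 p.2 (ξ n (p.2⁻¹ • p.1))‖ ∂m
        = ∫ p, ‖ξ n p.1 - L p.1 p.2 (ξ n (p.2⁻¹ • p.1))‖ ∂ν := by
      intro n
      rw [← MeasureTheory.integral_rnDeriv_smul hν.1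
        (f := fun p : X × G => ‖ξ n p.1 - L p.1 p.2 (ξ n (p.2⁻¹ • p.1))‖)]
      simp [F, smul_eq_mul]
    have htend : Tendsto (fun n => ∫ p, ‖ξ n p.1 - L p.1 p.2 (ξ n (p.2⁻¹ • p.1))‖ ∂ν)
        atTop (𝓝 0) := by
      have := hint F hFint
      simpa [key] using this
    have hε2 : (0 : ℝ) < ε ^ 2 := by positivity
    obtain ⟨n, hn⟩ := (htend.eventually (gt_mem_nhds hε2)).exists
    refine ⟨ξ n, hξu n, ?_⟩
    set c : X × G → ℝ := fun p => ‖ξ n p.1 - L p.1 p.2 (ξ n (p.2⁻¹ • p.1))‖ with hcdef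
    have hc : Measurable c := hmeasC (hξu n).1
    have hcbound : ∀ᵐ p ∂ν, c p ≤ 2 := (hbound (hξu n)).filter_mono hν.1.ae_le
    have hcint : Integrable c ν := by
      refine (integrable_const (2 : ℝ)).mono' hc.aestronglyMeasurable ?_
      filter_upwards [hcbound] with p hp
      simpa [hcdef, abs_of_nonneg (norm_nonneg _)] using hp
    have hlint : ∫⁻ p, ENNReal.ofReal (c p) ∂ν = ENNReal.ofReal (∫ p, c p ∂ν) :=
      (ofReal_integral_eq_lintegral_ofReal hcint
        (Filter.Eventually.of_forall fun p => norm_nonneg _)).symm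
    have hsetEq : {p : X × G | ENNReal.ofReal ε ≤ ENNReal.ofReal (c p)}
        = {p : X × G | ε ≤ c p} := by
      ext p
      exact ENNReal.ofReal_le_ofReal_iff (norm_nonneg _)
    have markov := mul_meas_ge_le_lintegral₀ (μ := ν)
      (hc.ennreal_ofReal.aemeasurable) (ENNReal.ofReal ε)
    rw [hsetEq, hlint] at markov
    have h2 : ENNReal.ofReal ε * ν {p : X × G | ε ≤ c p}
        ≤ ENNReal.ofReal ε * ENNReal.ofReal ε := by
      refine markov.trans ?_
      rw [← ENNReal.ofReal_mul hε.le]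
      exact ENNReal.ofReal_le_ofReal (by rw [← sq]; exact hn.le)
    exact (ENNReal.mul_le_mul_iff_right
      (ENNReal.ofReal_pos.mpr hε).ne' ENNReal.ofReal_ne_top).mp h2
  tfae_finish
end
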